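/- arXiv:1210.7996 — 8 statements merged into one kernel-verified Lean document; each statement's English description precedes it below -/
import Mathlib

section
/- (Proposition 1, implication 1)⇒2)) Suppose that T(n) := (∑_{k∈ℤ^d, 1≤|k|₁≤n} |k|₁^p |f̂(k)|^p)^{1/p} satisfies T(n) = O(n·ω(1/n)) as n→∞, i.e., there exist C>0 and N∈ℕ such that T(n) ≤ C·n·ω(1/n) for all n ≥ N. Then E_σ(n) := (∑_{1≤|k|₁≤n} (|k|₁/(n+1))^p |f̂(k)|^p + ∑_{|k|₁>n} |f̂(k)|^p)^{1/p} satisfies E_σ(n) = O(ω(1/n)) as n→∞. -/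
open scoped Real ENNReal
open MeasureTheory

def norm1 {d : ℕ} (k : Fin d → ℤ) : ℕ := ∑ j, (k j).natAbs

def diagSum {d : ℕ} (k : Fin d → ℤ) : ℤ := ∑ j, k j

noncomputable def fCoeff {d : ℕ} (f : (Fin d → ℝ) → ℂ) (k : Fin d → ℤ) : ℂ :=
  ∫ x in Set.Icc (0 : Fin d → ℝ) (fun _ => 2 * Real.pi),
    f x * Complex.exp (-Complex.I * (∑ j, (k j : ℂ) * (x j : ℂ)))

/-!
Put `b_k = (|k|₁ |f̂(k)|)^p`, so that the hypothesis reads `T(m)^p = ∑_{1 ≤ |k|₁ ≤ m} b_k ≤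
(C m ω(1/m))^p`. The Fejér part of `E_σ(n)^p` is exactly `(n+1)^(-p) T(n)^p ≤ (C ω(1/n))^p`.
For the tail, telescoping and Bernoulli's inequality give `v^(-p) ≤ p ∑_{m ≥ v} m^(-(p+1))`;
exchanging the order of summation (Abel summation) and using `ω(1/m) ≤ ω(1/n)` for `m > n`,
`∑_{|k|₁ > n} |f̂(k)|^p ≤ p ∑_{m > n} m^(-(p+1)) T(m)^p ≤ p C^p ω(1/n)^(p-1) ∑_{m > n} ω(1/m)/m`,
and condition (B) bounds the last sum by `C₀ ω(1/n)`.
-/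

open Filter Topology

lemma Real.rpow_neg_sub_rpow_neg_add_one_le {p x : ℝ} (hp : 1 ≤ p) (hx : 0 < x) :
    x ^ (-p) - (x + 1) ^ (-p) ≤ p * x ^ (-(p + 1)) := by
  have hx1 : 0 < x + 1 := by linarith
  have hbernoulli : 1 - p / (x + 1) ≤ (x / (x + 1)) ^ p := by
    have hs : -1 ≤ -(1 / (x + 1)) := by
      rw [neg_le_neg_iff, div_le_one hx1]; linarith
    convert one_add_mul_self_le_rpow_one_add hs hp using 1
    · ring
    · congr 1; field_simp; ring
  have hsplit : (x + 1) ^ (-p) = x ^ (-p) * (x / (x + 1)) ^ p := by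
    rw [Real.div_rpow hx.le hx1.le, Real.rpow_neg hx.le, Real.rpow_neg hx1.le]
    field_simp
  have hpow : x ^ (-(p + 1)) = x ^ (-p) / x := by
    rw [neg_add, Real.rpow_add hx, Real.rpow_neg_one, div_eq_mul_inv]
  calc x ^ (-p) - (x + 1) ^ (-p) = x ^ (-p) * (1 - (x / (x + 1)) ^ p) := by rw [hsplit]; ring
    _ ≤ x ^ (-p) * (p / (x + 1)) := by gcongr; linarith
    _ ≤ x ^ (-p) * (p / x) := by gcongr; linarith
    _ = p * x ^ (-(p + 1)) := by rw [hpow]; ring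

lemma Antitone.hasSum_sub_succ {f : ℕ → ℝ} (hf : Antitone f) (hlim : Tendsto f atTop (𝓝 0)) :
    HasSum (fun j ↦ f j - f (j + 1)) (f 0) := by
  rw [hasSum_iff_tendsto_nat_of_nonneg fun j ↦ sub_nonneg.2 (hf j.le_succ)]
  simp_rw [Finset.sum_range_sub']
  simpa using hlim.const_sub (f 0)

lemma tsum_ite_le_eq_tsum_add {α : Type*} [AddCommMonoid α] [TopologicalSpace α]
    (g : ℕ → α) (v : ℕ) : ∑' m, (if v ≤ m then g m else 0) = ∑' j, g (v + j) := by
  rw [← (add_right_injective v).tsum_eq]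
  · simp
  · intro m hm
    have hvm : v ≤ m := by by_contra h; simp [h] at hm
    exact ⟨m - v, by simp [hvm]⟩

lemma ofReal_rpow_neg_le_tsum {p : ℝ} (hp : 1 ≤ p) {v : ℕ} (hv : 1 ≤ v) :
    ENNReal.ofReal ((v : ℝ) ^ (-p)) ≤
      ENNReal.ofReal p * ∑' m : ℕ, if v ≤ m then ENNReal.ofReal ((m : ℝ) ^ (-(p + 1))) else 0 := by
  have hv0 : (0 : ℝ) < v := by exact_mod_cast hv
  set f : ℕ → ℝ := fun j ↦ ((v : ℝ) + j) ^ (-p) with hf_def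
  have hf : Antitone f := fun i j hij ↦
    Real.rpow_le_rpow_of_nonpos (by positivity) (by gcongr) (by linarith)
  have hlim : Tendsto f atTop (𝓝 0) :=
    (tendsto_rpow_neg_atTop (by linarith)).comp
      (tendsto_atTop_add_const_left _ _ tendsto_natCast_atTop_atTop)
  have htel := hf.hasSum_sub_succ hlim
  calc ENNReal.ofReal ((v : ℝ) ^ (-p)) = ∑' j, ENNReal.ofReal (f j - f (j + 1)) := by
        rw [← ENNReal.ofReal_tsum_of_nonneg (fun j ↦ sub_nonneg.2 (hf j.le_succ)) htel.summable,
          htel.tsum_eq, hf_def]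
        simp
    _ ≤ ∑' j : ℕ, ENNReal.ofReal p * ENNReal.ofReal (((v : ℝ) + j) ^ (-(p + 1))) := by
        gcongr with j
        rw [← ENNReal.ofReal_mul (by linarith)]
        apply ENNReal.ofReal_le_ofReal
        have := Real.rpow_neg_sub_rpow_neg_add_one_le hp (x := v + j) (by positivity)
        simpa [hf_def, add_assoc] using this
    _ = _ := by
        rw [ENNReal.tsum_mul_left, tsum_ite_le_eq_tsum_add]
        push_cast
        rfl

lemma ofReal_rpow_le_tsum {p a : ℝ} (hp : 1 ≤ p) (ha : 0 ≤ a) {v : ℕ} (hv : 1 ≤ v) :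
    ENNReal.ofReal (a ^ p) ≤ ENNReal.ofReal p * ∑' m : ℕ, if v ≤ m then
      ENNReal.ofReal ((m : ℝ) ^ (-(p + 1))) * ENNReal.ofReal (((v : ℝ) * a) ^ p) else 0 := by
  have hv0 : (0 : ℝ) < v := by exact_mod_cast hv
  calc ENNReal.ofReal (a ^ p)
      = ENNReal.ofReal ((v : ℝ) ^ (-p)) * ENNReal.ofReal (((v : ℝ) * a) ^ p) := by
        rw [← ENNReal.ofReal_mul (by positivity), Real.mul_rpow hv0.le ha, ← mul_assoc,
          ← Real.rpow_add hv0, neg_add_cancel, Real.rpow_zero, one_mul]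
    _ ≤ (ENNReal.ofReal p * ∑' m : ℕ, if v ≤ m then ENNReal.ofReal ((m : ℝ) ^ (-(p + 1)))
          else 0) * ENNReal.ofReal (((v : ℝ) * a) ^ p) := by
        gcongr
        exact ofReal_rpow_neg_le_tsum hp hv
    _ = _ := by
        rw [mul_assoc, ← ENNReal.tsum_mul_right]
        simp only [ite_mul, zero_mul]

lemma ENNReal.rpow_one_div_le_ofReal_iff {x : ℝ≥0∞} {y p : ℝ} (hp : 0 < p) (hy : 0 ≤ y) :
    x ^ (1 / p) ≤ ENNReal.ofReal y ↔ x ≤ ENNReal.ofReal (y ^ p) := by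
  rw [one_div, ENNReal.rpow_inv_le_iff hp, ENNReal.ofReal_rpow_of_nonneg hy hp.le]

lemma one_div_natCast_mem_Ioc {m : ℕ} (hm : 1 ≤ m) : 1 / (m : ℝ) ∈ Set.Ioc 0 1 :=
  ⟨by positivity, by rw [div_le_one (by positivity)]; exact_mod_cast hm⟩

lemma MonotoneOn.apply_one_div_natCast_le {ω : ℝ → ℝ} (hω : MonotoneOn ω (Set.Icc 0 1))
    {n m : ℕ} (hn : 1 ≤ n) (hnm : n ≤ m) : ω (1 / m) ≤ ω (1 / n) :=
  hω (Set.Ioc_subset_Icc_self (one_div_natCast_mem_Ioc (hn.trans hnm)))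
    (Set.Ioc_subset_Icc_self (one_div_natCast_mem_Ioc hn))
    (one_div_le_one_div_of_le (by positivity) (by exact_mod_cast hnm))

lemma Real.rpow_sub_one_mul_self {x p : ℝ} (hx : 0 ≤ x) (hp : p ≠ 0) : x ^ (p - 1) * x = x ^ p := by
  conv_rhs => rw [← sub_add_cancel p 1]
  rw [Real.rpow_add' hx (by simpa using hp), Real.rpow_one]

lemma Real.rpow_neg_add_one_mul_rpow_le {p C x w w' : ℝ} (hp : 1 ≤ p) (hC : 0 ≤ C) (hx : 0 < x)
    (hw' : 0 ≤ w') (hw'w : w' ≤ w) :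
    x ^ (-(p + 1)) * (C * x * w') ^ p ≤ C ^ p * w ^ (p - 1) * (w' / x) := by
  have hx_pow : x ^ (-(p + 1)) * x ^ p = x⁻¹ := by
    rw [← Real.rpow_add hx, show -(p + 1) + p = -1 by ring, Real.rpow_neg_one]
  calc x ^ (-(p + 1)) * (C * x * w') ^ p = C ^ p * w' ^ (p - 1) * (w' / x) := by
        rw [Real.mul_rpow (by positivity) hw', Real.mul_rpow hC hx.le,
          ← Real.rpow_sub_one_mul_self hw' (by linarith), div_eq_mul_inv, ← hx_pow]
        ring
    _ ≤ C ^ p * w ^ (p - 1) * (w' / x) := by gcongr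

section WeightedPowerSums

-- `ν i` plays the role of `|k|₁` and `a i` that of `|f̂(k)|`.
variable {ι : Type*} (ν : ι → ℕ) (a : ι → ℝ) (p : ℝ)

noncomputable def derivPartialSumPow (n : ℕ) : ℝ≥0∞ :=
  ∑' i, if 1 ≤ ν i ∧ ν i ≤ n then ENNReal.ofReal (((ν i : ℝ) * a i) ^ p) else 0

noncomputable def fejerHeadPow (n : ℕ) : ℝ≥0∞ :=
  ∑' i, if 1 ≤ ν i ∧ ν i ≤ n then ENNReal.ofReal (((ν i : ℝ) / ((n : ℝ) + 1) * a i) ^ p) else 0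

noncomputable def tailPowSum (n : ℕ) : ℝ≥0∞ :=
  ∑' i, if n < ν i then ENNReal.ofReal (a i ^ p) else 0

variable {ν a p}

lemma fejerHeadPow_eq (ha : ∀ i, 0 ≤ a i) (n : ℕ) :
    fejerHeadPow ν a p n = ENNReal.ofReal (((n : ℝ) + 1) ^ (-p)) * derivPartialSumPow ν a p n := by
  rw [derivPartialSumPow, ← ENNReal.tsum_mul_left]
  refine tsum_congr fun i ↦ ?_
  split_ifs
  · have := ha i
    rw [← ENNReal.ofReal_mul (by positivity), div_eq_inv_mul, mul_assoc,
      Real.mul_rpow (by positivity) (by positivity), Real.inv_rpow (by positivity),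
      Real.rpow_neg (by positivity)]
  · simp

lemma fejerHeadPow_le (hp : 0 ≤ p) (ha : ∀ i, 0 ≤ a i) {C w : ℝ} (hC : 0 ≤ C) (hw : 0 ≤ w)
    {n : ℕ} (hT : derivPartialSumPow ν a p n ≤ ENNReal.ofReal ((C * n * w) ^ p)) :
    fejerHeadPow ν a p n ≤ ENNReal.ofReal ((C * w) ^ p) := by
  rw [fejerHeadPow_eq ha]
  calc _ ≤ ENNReal.ofReal (((n : ℝ) + 1) ^ (-p)) * ENNReal.ofReal ((C * n * w) ^ p) := by gcongr
    _ = ENNReal.ofReal (((n + 1 : ℝ)⁻¹ * (C * n * w)) ^ p) := by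
        rw [← ENNReal.ofReal_mul (by positivity), Real.mul_rpow (x := (n + 1 : ℝ)⁻¹)
          (by positivity) (by positivity), Real.inv_rpow (by positivity), Real.rpow_neg (by positivity)]
    _ ≤ ENNReal.ofReal ((C * w) ^ p) := by
        refine ENNReal.ofReal_le_ofReal (Real.rpow_le_rpow (by positivity) ?_ hp)
        rw [inv_mul_le_iff₀ (by positivity)]
        nlinarith [mul_nonneg hC hw]

lemma tailPowSum_le (hp : 1 ≤ p) (ha : ∀ i, 0 ≤ a i) (n : ℕ) :
    tailPowSum ν a p n ≤ ENNReal.ofReal p * ∑' m : ℕ,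
      if n < m then ENNReal.ofReal ((m : ℝ) ^ (-(p + 1))) * derivPartialSumPow ν a p m else 0 := by
  set b : ℕ → ι → ℝ≥0∞ := fun m i ↦
    if 1 ≤ ν i ∧ ν i ≤ m then ENNReal.ofReal (((ν i : ℝ) * a i) ^ p) else 0
  have key : ∀ i, (if n < ν i then ENNReal.ofReal (a i ^ p) else 0) ≤ ENNReal.ofReal p *
      ∑' m : ℕ, if n < m then ENNReal.ofReal ((m : ℝ) ^ (-(p + 1))) * b m i else 0 := by
    intro i
    split_ifs with hi
    · refine (ofReal_rpow_le_tsum hp (ha i) (show 1 ≤ ν i by omega)).trans ?_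
      gcongr with m
      by_cases hm : ν i ≤ m
      · simp only [b, if_pos hm, if_pos (show n < m by omega),
          if_pos (show 1 ≤ ν i ∧ ν i ≤ m by omega), le_refl]
      · rw [if_neg hm]
        exact zero_le
    · exact zero_le
  calc tailPowSum ν a p n ≤ ∑' i, ENNReal.ofReal p *
        ∑' m : ℕ, if n < m then ENNReal.ofReal ((m : ℝ) ^ (-(p + 1))) * b m i else 0 :=
      ENNReal.tsum_le_tsum key
    _ = _ := by
      rw [ENNReal.tsum_mul_left, ENNReal.tsum_comm]
      congr 1
      refine tsum_congr fun m ↦ ?_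
      split_ifs
      · simp only [b, derivPartialSumPow, ← ENNReal.tsum_mul_left, mul_ite, mul_zero]
      · exact tsum_zero

end WeightedPowerSums

section Modulus

variable {ι : Type*} {ν : ι → ℕ} {a : ι → ℝ} {p : ℝ} {ω : ℝ → ℝ}

lemma tailPowSum_le_of_derivPartialSumPow_le (hp : 1 ≤ p) (ha : ∀ i, 0 ≤ a i)
    (hωm : MonotoneOn ω (Set.Icc 0 1)) (hωpos : ∀ t ∈ Set.Ioc (0 : ℝ) 1, 0 < ω t)
    {C C₀ : ℝ} (hC : 0 ≤ C) {n : ℕ} (hn : 1 ≤ n)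
    (hT : ∀ m, n < m → derivPartialSumPow ν a p m ≤ ENNReal.ofReal ((C * m * ω (1 / m)) ^ p))
    (hB : ∑' v : ℕ, ENNReal.ofReal (ω (1 / ((n : ℝ) + 1 + v)) / ((n : ℝ) + 1 + v))
      ≤ ENNReal.ofReal (C₀ * ω (1 / n))) :
    tailPowSum ν a p n ≤ ENNReal.ofReal (p * C₀ * (C * ω (1 / n)) ^ p) := by
  have hW := (hωpos _ (one_div_natCast_mem_Ioc hn)).le
  set K := C ^ p * ω (1 / n) ^ (p - 1)
  have hK : 0 ≤ K := by positivity
  have hterm : ∀ m, (if n < m then ENNReal.ofReal ((m : ℝ) ^ (-(p + 1))) *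
      derivPartialSumPow ν a p m else 0) ≤
      if n < m then ENNReal.ofReal (K * (ω (1 / m) / m)) else 0 := by
    intro m
    split_ifs with hm
    · have hm0 : (0 : ℝ) < m := by exact_mod_cast n.zero_le.trans_lt hm
      have hωm_pos := hωpos _ (one_div_natCast_mem_Ioc (hn.trans hm.le))
      calc _ ≤ ENNReal.ofReal ((m : ℝ) ^ (-(p + 1))) *
            ENNReal.ofReal ((C * m * ω (1 / m)) ^ p) := by gcongr; exact hT m hm
        _ = ENNReal.ofReal ((m : ℝ) ^ (-(p + 1)) * (C * m * ω (1 / m)) ^ p) :=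
          (ENNReal.ofReal_mul (by positivity)).symm
        _ ≤ _ := ENNReal.ofReal_le_ofReal <| Real.rpow_neg_add_one_mul_rpow_le hp hC hm0
            hωm_pos.le (hωm.apply_one_div_natCast_le hn hm.le)
    · exact le_rfl
  calc tailPowSum ν a p n ≤ ENNReal.ofReal p * ∑' m : ℕ,
        if n < m then ENNReal.ofReal ((m : ℝ) ^ (-(p + 1))) * derivPartialSumPow ν a p m
        else 0 := tailPowSum_le hp ha n
    _ ≤ ENNReal.ofReal p * ∑' m : ℕ, if n < m then ENNReal.ofReal (K * (ω (1 / m) / m)) else 0 := by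
        gcongr with m
        exact hterm m
    _ = ENNReal.ofReal p * (ENNReal.ofReal K *
          ∑' v : ℕ, ENNReal.ofReal (ω (1 / ((n : ℝ) + 1 + v)) / ((n : ℝ) + 1 + v))) := by
        simp_rw [Nat.lt_iff_add_one_le]
        rw [tsum_ite_le_eq_tsum_add]
        push_cast
        simp_rw [ENNReal.ofReal_mul hK, ENNReal.tsum_mul_left]
    _ ≤ ENNReal.ofReal p * (ENNReal.ofReal K * ENNReal.ofReal (C₀ * ω (1 / n))) := by gcongr
    _ = ENNReal.ofReal (p * C₀ * (C * ω (1 / n)) ^ p) := by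
        rw [← ENNReal.ofReal_mul hK, ← ENNReal.ofReal_mul (by linarith)]
        congr 1
        rw [Real.mul_rpow hC hW, ← Real.rpow_sub_one_mul_self hW (by linarith)]
        ring

theorem fejerHeadPow_add_tailPowSum_le (hp : 1 ≤ p) (ha : ∀ i, 0 ≤ a i)
    (hωm : MonotoneOn ω (Set.Icc 0 1)) (hωpos : ∀ t ∈ Set.Ioc (0 : ℝ) 1, 0 < ω t)
    {C C₀ : ℝ} (hC : 0 ≤ C) (hC₀ : 0 ≤ C₀) {n : ℕ} (hn : 1 ≤ n)
    (hT : ∀ m, n ≤ m → derivPartialSumPow ν a p m ≤ ENNReal.ofReal ((C * m * ω (1 / m)) ^ p))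
    (hB : ∑' v : ℕ, ENNReal.ofReal (ω (1 / ((n : ℝ) + 1 + v)) / ((n : ℝ) + 1 + v))
      ≤ ENNReal.ofReal (C₀ * ω (1 / n))) :
    fejerHeadPow ν a p n + tailPowSum ν a p n ≤
      ENNReal.ofReal ((1 + p * C₀) * (C * ω (1 / n)) ^ p) := by
  have hW := (hωpos _ (one_div_natCast_mem_Ioc hn)).le
  calc _ ≤ ENNReal.ofReal ((C * ω (1 / n)) ^ p) + ENNReal.ofReal (p * C₀ * (C * ω (1 / n)) ^ p) :=
        add_le_add (fejerHeadPow_le (by linarith) ha hC hW (hT n le_rfl))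
          (tailPowSum_le_of_derivPartialSumPow_le hp ha hωm hωpos hC hn
            (fun m hm ↦ hT m hm.le) hB)
    _ = _ := by
        have : 0 ≤ p := by linarith
        rw [← ENNReal.ofReal_add (by positivity) (by positivity)]
        congr 1
        ring

end Modulus

theorem stmt_0_general
    {d : ℕ} {p : ℝ} (hp : 1 ≤ p)
    (f : (Fin d → ℝ) → ℂ)
    (ω : ℝ → ℝ)
    (hωm : MonotoneOn ω (Set.Icc 0 1))
    (hωpos : ∀ t ∈ Set.Ioc (0:ℝ) 1, 0 < ω t)
    (hB : ∃ C₀ > (0:ℝ), ∃ N₀ : ℕ, 1 ≤ N₀ ∧ ∀ n : ℕ, N₀ ≤ n →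
      (∑' v : ℕ, ENNReal.ofReal (ω (1 / ((n : ℝ) + 1 + (v : ℝ))) / ((n : ℝ) + 1 + (v : ℝ))))
        ≤ ENNReal.ofReal (C₀ * ω (1 / (n : ℝ))))
    (hT :
      ∃ C > (0:ℝ), ∃ N : ℕ, ∀ n : ℕ, N ≤ n →
      (∑' k : Fin d → ℤ, if 1 ≤ norm1 k ∧ norm1 k ≤ n then
          ENNReal.ofReal (((norm1 k : ℝ) * ‖fCoeff f k‖) ^ p) else 0) ^ (1/p)
        ≤ ENNReal.ofReal (C * (n : ℝ) * ω (1 / (n : ℝ))))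
    :
    ∃ C > (0:ℝ), ∃ N : ℕ, ∀ n : ℕ, N ≤ n →
      ((∑' k : Fin d → ℤ, if 1 ≤ norm1 k ∧ norm1 k ≤ n then
          ENNReal.ofReal ((((norm1 k : ℝ) / ((n : ℝ) + 1)) * ‖fCoeff f k‖) ^ p) else 0)
        + ∑' k : Fin d → ℤ, if n < norm1 k then
          ENNReal.ofReal ((‖fCoeff f k‖) ^ p) else 0) ^ (1/p)
        ≤ ENNReal.ofReal (C * ω (1 / (n : ℝ))) := by
  obtain ⟨C₀, hC₀, N₀, -, hB⟩ := hB
  obtain ⟨C, hC, N, hT⟩ := hT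
  have hp0 : 0 < p := by linarith
  refine ⟨C * (1 + p * C₀) ^ (1 / p), by positivity, max (max N N₀) 1, fun n hn ↦ ?_⟩
  obtain ⟨hNn, hN₀n, hn⟩ : N ≤ n ∧ N₀ ≤ n ∧ 1 ≤ n := by simpa using hn
  have hT' : ∀ m, n ≤ m → derivPartialSumPow norm1 (fun k ↦ ‖fCoeff f k‖) p m ≤
      ENNReal.ofReal ((C * m * ω (1 / m)) ^ p) := fun m hm ↦
    have := (hωpos _ (one_div_natCast_mem_Ioc (hn.trans hm))).le
    (ENNReal.rpow_one_div_le_ofReal_iff hp0 (by positivity)).1 (hT m (hNn.trans hm))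
  have hW := (hωpos _ (one_div_natCast_mem_Ioc hn)).le
  rw [ENNReal.rpow_one_div_le_ofReal_iff hp0 (by positivity)]
  calc _ ≤ ENNReal.ofReal ((1 + p * C₀) * (C * ω (1 / n)) ^ p) :=
        fejerHeadPow_add_tailPowSum_le hp (fun _ ↦ norm_nonneg _) hωm hωpos hC.le hC₀.le hn hT'
          (hB n hN₀n)
    _ = _ := by
        have hconst : (C * (1 + p * C₀) ^ (1 / p)) ^ p = C ^ p * (1 + p * C₀) := by
          rw [Real.mul_rpow hC.le (by positivity), ← Real.rpow_mul (by positivity),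
            one_div_mul_cancel hp0.ne', Real.rpow_one]
        rw [Real.mul_rpow (x := C * _) (by positivity) hW, hconst, Real.mul_rpow hC.le hW]
        congr 1
        ring

theorem stmt_0
    {d : ℕ} (hd : 1 ≤ d) {p : ℝ} (hp : 1 ≤ p)
    (f : (Fin d → ℝ) → ℂ)
    (hper : ∀ (x : Fin d → ℝ) (j : Fin d), f (Function.update x j (x j + 2 * Real.pi)) = f x)
    (hint : IntegrableOn f (Set.Icc (0 : Fin d → ℝ) (fun _ => 2 * Real.pi)))
    (ω : ℝ → ℝ)
    (hωc : ContinuousOn ω (Set.Icc 0 1)) (hωm : MonotoneOn ω (Set.Icc 0 1))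
    (hω0 : ω 0 = 0) (hωpos : ∀ t ∈ Set.Ioc (0:ℝ) 1, 0 < ω t)
    (hB : ∃ C₀ > (0:ℝ), ∃ N₀ : ℕ, 1 ≤ N₀ ∧ ∀ n : ℕ, N₀ ≤ n →
      (∑' v : ℕ, ENNReal.ofReal (ω (1 / ((n : ℝ) + 1 + (v : ℝ))) / ((n : ℝ) + 1 + (v : ℝ))))
        ≤ ENNReal.ofReal (C₀ * ω (1 / (n : ℝ))))
    (hT :
      ∃ C > (0:ℝ), ∃ N : ℕ, ∀ n : ℕ, N ≤ n →
      (∑' k : Fin d → ℤ, if 1 ≤ norm1 k ∧ norm1 k ≤ n then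
          ENNReal.ofReal (((norm1 k : ℝ) * ‖fCoeff f k‖) ^ p) else 0) ^ (1/p)
        ≤ ENNReal.ofReal (C * (n : ℝ) * ω (1 / (n : ℝ))))
    :
    ∃ C > (0:ℝ), ∃ N : ℕ, ∀ n : ℕ, N ≤ n →
      ((∑' k : Fin d → ℤ, if 1 ≤ norm1 k ∧ norm1 k ≤ n then
          ENNReal.ofReal ((((norm1 k : ℝ) / ((n : ℝ) + 1)) * ‖fCoeff f k‖) ^ p) else 0)
        + ∑' k : Fin d → ℤ, if n < norm1 k then
          ENNReal.ofReal ((‖fCoeff f k‖) ^ p) else 0) ^ (1/p)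
        ≤ ENNReal.ofReal (C * ω (1 / (n : ℝ))) :=
  stmt_0_general hp f ω hωm hωpos hB hT
end

section
/- (Proposition 1, implication 2)⇒3)) Suppose that E_σ(n) := (∑_{k∈ℤ^d, 1≤|k|₁≤n} (|k|₁/(n+1))^p |f̂(k)|^p + ∑_{|k|₁>n} |f̂(k)|^p)^{1/p} satisfies E_σ(n) = O(ω(1/n)) as n→∞. Then f belongs to S^p H_ω; explicitly, D(h) := (∑_{k∈ℤ^d} |f̂(k)|^p · |1 − e^{i h σ(k)}|^p)^{1/p}, where σ(k) = k_1 + ⋯ + k_d, satisfies D(h) = O(ω(|h|)) as h → 0 (h real): there exist C > 0 and δ > 0 such that D(h) ≤ C·ω(|h|) for all real h with 0 < |h| < δ. -/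
/-!
Write `a k = ‖f̂(k)‖` and `w_n(k) = |k|₁/(n+1)` for `|k|₁ ≤ n`, `w_n(k) = 1` otherwise, so that
`E_σ(n)` is the `ℓ^p` norm of `w_n a`. Given small `h ≠ 0`, take `n = ⌈1/|h|⌉`. Then
`|1 - e^{ihσ(k)}| ≤ min(2, |h| |k|₁) ≤ 3 w_n(k)`, because `|σ(k)| ≤ |k|₁` and `|h| (n+1) ≤ 3`.
Hence `D(h) ≤ 3 E_σ(n) = O(ω(1/n))`, and `ω(1/n) ≤ ω(|h|)` since `1/n ≤ |h|`.
-/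

open scoped Real ENNReal
open MeasureTheory

lemma abs_diagSum_le_norm1 {d : ℕ} (k : Fin d → ℤ) : |(diagSum k : ℝ)| ≤ norm1 k := by
  push_cast [diagSum, norm1, Nat.cast_natAbs]
  exact Finset.abs_sum_le_sum_abs _ _

lemma norm_one_sub_exp_I_mul_le_two (θ : ℝ) : ‖1 - Complex.exp (Complex.I * θ)‖ ≤ 2 := by
  calc ‖1 - Complex.exp (Complex.I * θ)‖ ≤ ‖(1 : ℂ)‖ + ‖Complex.exp (Complex.I * θ)‖ :=
        norm_sub_le _ _
    _ = 2 := by rw [Complex.norm_exp_I_mul_ofReal]; norm_num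

noncomputable def sigmaWeight {d : ℕ} (n : ℕ) (k : Fin d → ℤ) : ℝ :=
  if norm1 k ≤ n then norm1 k / (n + 1) else 1

lemma sigmaWeight_nonneg {d : ℕ} (n : ℕ) (k : Fin d → ℤ) : 0 ≤ sigmaWeight n k := by
  unfold sigmaWeight; split_ifs <;> positivity

lemma tsum_split_eq_tsum_sigmaWeight {d : ℕ} {p : ℝ} (hp : p ≠ 0) (n : ℕ) (a : (Fin d → ℤ) → ℝ) :
    (∑' k : Fin d → ℤ, if 1 ≤ norm1 k ∧ norm1 k ≤ n then
        ENNReal.ofReal (((norm1 k : ℝ) / ((n : ℝ) + 1) * a k) ^ p) else 0)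
      + (∑' k : Fin d → ℤ, if n < norm1 k then ENNReal.ofReal (a k ^ p) else 0)
      = ∑' k, ENNReal.ofReal ((sigmaWeight n k * a k) ^ p) := by
  rw [← ENNReal.tsum_add]
  refine tsum_congr fun k => ?_
  unfold sigmaWeight
  split_ifs <;> first | omega | simp_all [Real.zero_rpow hp]

lemma norm_one_sub_exp_le_sigmaWeight {d : ℕ} {h c : ℝ} {n : ℕ} (hc : 2 ≤ c)
    (hhn : |h| * (n + 1) ≤ c) (k : Fin d → ℤ) :
    ‖1 - Complex.exp (Complex.I * h * diagSum k)‖ ≤ c * sigmaWeight n k := by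
  have harg : Complex.I * h * diagSum k = Complex.I * ((h * diagSum k : ℝ) : ℂ) := by
    push_cast; ring
  rw [harg]
  unfold sigmaWeight
  split_ifs with hk
  · calc ‖1 - Complex.exp (Complex.I * ((h * diagSum k : ℝ) : ℂ))‖ ≤ |h * diagSum k| := by
          rw [norm_sub_rev]; exact Real.norm_exp_I_mul_ofReal_sub_one_le
      _ ≤ |h| * norm1 k := by
          rw [abs_mul]; exact mul_le_mul_of_nonneg_left (abs_diagSum_le_norm1 k) (abs_nonneg h)
      _ = |h| * (n + 1) * (norm1 k / (n + 1)) := by field_simp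
      _ ≤ c * (norm1 k / (n + 1)) := by gcongr
  · rw [mul_one]; exact (norm_one_sub_exp_I_mul_le_two _).trans hc

lemma tsum_ofReal_mul_rpow_le {ι : Type*} {p c : ℝ} (hp : 0 < p) (hc : 0 ≤ c)
    {a b w : ι → ℝ} (ha : ∀ k, 0 ≤ a k) (hb : ∀ k, 0 ≤ b k) (hw : ∀ k, 0 ≤ w k)
    (hbw : ∀ k, b k ≤ c * w k) :
    (∑' k, ENNReal.ofReal ((a k * b k) ^ p)) ^ (1 / p)
      ≤ ENNReal.ofReal c * (∑' k, ENNReal.ofReal ((w k * a k) ^ p)) ^ (1 / p) := by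
  have hterm : ∀ k, ENNReal.ofReal ((a k * b k) ^ p)
      ≤ ENNReal.ofReal (c ^ p) * ENNReal.ofReal ((w k * a k) ^ p) := by
    intro k
    rw [← ENNReal.ofReal_mul (by positivity), ← Real.mul_rpow hc (mul_nonneg (hw k) (ha k))]
    refine ENNReal.ofReal_le_ofReal (Real.rpow_le_rpow (mul_nonneg (ha k) (hb k)) ?_ hp.le)
    calc a k * b k ≤ a k * (c * w k) := mul_le_mul_of_nonneg_left (hbw k) (ha k)
      _ = c * (w k * a k) := by ring
  calc (∑' k, ENNReal.ofReal ((a k * b k) ^ p)) ^ (1 / p)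
      ≤ (ENNReal.ofReal (c ^ p) * ∑' k, ENNReal.ofReal ((w k * a k) ^ p)) ^ (1 / p) := by
        rw [← ENNReal.tsum_mul_left]
        exact ENNReal.rpow_le_rpow (ENNReal.tsum_le_tsum hterm) (by positivity)
    _ = ENNReal.ofReal c * (∑' k, ENNReal.ofReal ((w k * a k) ^ p)) ^ (1 / p) := by
        rw [ENNReal.mul_rpow_of_nonneg _ _ (by positivity),
          ← ENNReal.ofReal_rpow_of_nonneg hc hp.le, ← ENNReal.rpow_mul, mul_one_div_cancel hp.ne', ENNReal.rpow_one]

lemma exists_nat_one_div_le_and_mul_succ_le_three {t : ℝ} (ht : 0 < t) (N : ℕ)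
    (htN : t < 1 / (N + 1)) :
    ∃ n : ℕ, N ≤ n ∧ 1 / (n : ℝ) ≤ t ∧ 1 / (n : ℝ) ≤ 1 ∧ t * (n + 1) ≤ 3 := by
  have hNt : (N : ℝ) + 1 < 1 / t := by rwa [lt_one_div (by positivity) ht]
  have ht1 : t ≤ 1 := htN.le.trans (div_le_one_of_le₀ (by simp) (by positivity))
  have hle : 1 / t ≤ ⌈1 / t⌉₊ := Nat.le_ceil _
  have hlt : (⌈1 / t⌉₊ : ℝ) < 1 / t + 1 := Nat.ceil_lt_add_one (by positivity)
  have hn : (1 : ℝ) ≤ ⌈1 / t⌉₊ := by linarith [(N.cast_nonneg : (0 : ℝ) ≤ N)]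
  refine ⟨⌈1 / t⌉₊, by exact_mod_cast (by linarith : (N : ℝ) ≤ ⌈1 / t⌉₊), ?_, ?_, ?_⟩
  · rw [div_le_iff₀ (by positivity)]
    rwa [div_le_iff₀ ht, mul_comm] at hle
  · rw [div_le_one (by positivity)]; exact hn
  · calc t * (⌈1 / t⌉₊ + 1) ≤ t * (1 / t + 2) := mul_le_mul_of_nonneg_left (by linarith) ht.le
      _ = 1 + 2 * t := by field_simp
      _ ≤ 3 := by linarith

theorem stmt_2_general
    {d : ℕ} {p : ℝ} (hp : 1 ≤ p)
    (f : (Fin d → ℝ) → ℂ)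
    (ω : ℝ → ℝ)
    (hωm : MonotoneOn ω (Set.Icc 0 1))
    (hE :
      ∃ C > (0:ℝ), ∃ N : ℕ, ∀ n : ℕ, N ≤ n →
      ((∑' k : Fin d → ℤ, if 1 ≤ norm1 k ∧ norm1 k ≤ n then
          ENNReal.ofReal ((((norm1 k : ℝ) / ((n : ℝ) + 1)) * ‖fCoeff f k‖) ^ p) else 0)
        + ∑' k : Fin d → ℤ, if n < norm1 k then
          ENNReal.ofReal ((‖fCoeff f k‖) ^ p) else 0) ^ (1/p)
        ≤ ENNReal.ofReal (C * ω (1 / (n : ℝ))))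
    :
    ∃ C > (0:ℝ), ∃ δ > (0:ℝ), ∀ h : ℝ, 0 < |h| → |h| < δ →
      (∑' k : Fin d → ℤ,
          ENNReal.ofReal ((‖fCoeff f k‖ * ‖1 - Complex.exp (Complex.I * (h : ℂ) * (diagSum k : ℂ))‖) ^ p)) ^ (1/p)
        ≤ ENNReal.ofReal (C * ω |h|) := by
  obtain ⟨C, hC, N, hEN⟩ := hE
  have hp0 : 0 < p := one_pos.trans_le hp
  refine ⟨3 * C, by positivity, 1 / (N + 1), by positivity, fun h h0 hδ => ?_⟩
  obtain ⟨n, hNn, hnh, hn1, hhn⟩ := exists_nat_one_div_le_and_mul_succ_le_three h0 N hδ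
  have hh1 : |h| ≤ 1 := hδ.le.trans (div_le_one_of_le₀ (by simp) (by positivity))
  calc _ ≤ ENNReal.ofReal 3
          * (∑' k, ENNReal.ofReal ((sigmaWeight n k * ‖fCoeff f k‖) ^ p)) ^ (1 / p) :=
        tsum_ofReal_mul_rpow_le hp0 (by norm_num) (fun _ => norm_nonneg _) (fun _ => norm_nonneg _)
          (sigmaWeight_nonneg n) (norm_one_sub_exp_le_sigmaWeight (by norm_num) hhn)
    _ ≤ ENNReal.ofReal 3 * ENNReal.ofReal (C * ω (1 / n)) := by
        rw [← tsum_split_eq_tsum_sigmaWeight hp0.ne']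
        exact mul_le_mul_right (hEN n hNn) _
    _ ≤ ENNReal.ofReal (3 * C * ω |h|) := by
        rw [← ENNReal.ofReal_mul (by norm_num), mul_assoc]
        gcongr
        exact hωm ⟨by positivity, hn1⟩ ⟨abs_nonneg h, hh1⟩ hnh

theorem stmt_2
    {d : ℕ} (hd : 1 ≤ d) {p : ℝ} (hp : 1 ≤ p)
    (f : (Fin d → ℝ) → ℂ)
    (hper : ∀ (x : Fin d → ℝ) (j : Fin d), f (Function.update x j (x j + 2 * Real.pi)) = f x)
    (hint : IntegrableOn f (Set.Icc (0 : Fin d → ℝ) (fun _ => 2 * Real.pi)))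
    (ω : ℝ → ℝ)
    (hωc : ContinuousOn ω (Set.Icc 0 1)) (hωm : MonotoneOn ω (Set.Icc 0 1))
    (hω0 : ω 0 = 0) (hωpos : ∀ t ∈ Set.Ioc (0:ℝ) 1, 0 < ω t)
    (hE :
      ∃ C > (0:ℝ), ∃ N : ℕ, ∀ n : ℕ, N ≤ n →
      ((∑' k : Fin d → ℤ, if 1 ≤ norm1 k ∧ norm1 k ≤ n then
          ENNReal.ofReal ((((norm1 k : ℝ) / ((n : ℝ) + 1)) * ‖fCoeff f k‖) ^ p) else 0)
        + ∑' k : Fin d → ℤ, if n < norm1 k then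
          ENNReal.ofReal ((‖fCoeff f k‖) ^ p) else 0) ^ (1/p)
        ≤ ENNReal.ofReal (C * ω (1 / (n : ℝ))))
    :
    ∃ C > (0:ℝ), ∃ δ > (0:ℝ), ∀ h : ℝ, 0 < |h| → |h| < δ →
      (∑' k : Fin d → ℤ,
          ENNReal.ofReal ((‖fCoeff f k‖ * ‖1 - Complex.exp (Complex.I * (h : ℂ) * (diagSum k : ℂ))‖) ^ p)) ^ (1/p)
        ≤ ENNReal.ofReal (C * ω |h|) :=
  stmt_2_general hp f ω hωm hE
end

section
/- (Proposition 1, implication 3)⇒1) for f ∈ L_{1,Y}) Suppose in addition that f̂(k) = 0 for every k ∈ ℤ^d that does not lie in Y = ℤ^d_+ ∪ ℤ^d_− (that is, unless either k_j ≥ 0 for all j, or k_j < 0 for all j). If D(h) := (∑_{k∈ℤ^d} |f̂(k)|^p · |1 − e^{i h σ(k)}|^p)^{1/p}, where σ(k) = k_1 + ⋯ + k_d, satisfies D(h) = O(ω(|h|)) as h → 0, then T(n) := (∑_{1≤|k|₁≤n} |k|₁^p |f̂(k)|^p)^{1/p} satisfies T(n) = O(n·ω(1/n)) as n→∞. -/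
/-! On `Y` one has `|σ(k)| = |k|₁`, so for `|k|₁ ≤ n` the phase `σ(k)/n` lies in `[-π, π]`, where
Jordan's inequality gives `|1 - e^{iθ}| = 2|sin(θ/2)| ≥ 2|θ|/π`. Hence
`|k|₁ ≤ (π/2) n |1 - e^{iσ(k)/n}|` termwise on `Y`, while off `Y` the coefficients vanish;
summing the `p`-th powers gives `T(n) ≤ (π/2) n D(1/n) = O(n ω(1/n))`. -/

open scoped Real ENNReal
open MeasureTheory

open Complex in
theorem mul_abs_le_norm_exp_I_mul_ofReal_sub_one {x : ℝ} (hx : |x| ≤ π) :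
    2 / π * |x| ≤ ‖exp (I * x) - 1‖ := by
  have hsin : Real.sin (|x| / 2) ≤ |Real.sin (x / 2)| := by
    rcases abs_cases x with ⟨h, _⟩ | ⟨h, _⟩
    · rw [h]; exact le_abs_self _
    · rw [h, neg_div, Real.sin_neg]; exact neg_le_abs _
  have hjordan := Real.mul_le_sin (x := |x| / 2) (by positivity) (by linarith)
  rw [norm_exp_I_mul_ofReal_sub_one, norm_mul, Real.norm_ofNat, Real.norm_eq_abs]
  linarith

theorem abs_diagSum_eq_norm1 {d : ℕ} {k : Fin d → ℤ} (hk : (∀ j, 0 ≤ k j) ∨ (∀ j, k j ≤ 0)) :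
    |diagSum k| = norm1 k := by
  simp only [diagSum, norm1, Nat.cast_sum, Int.natCast_natAbs]
  rcases hk with hk | hk
  · rw [Finset.abs_sum_of_nonneg fun j _ => hk j]
    exact Finset.sum_congr rfl fun j _ => (abs_of_nonneg (hk j)).symm
  · rw [abs_of_nonpos (Finset.sum_nonpos fun j _ => hk j), ← Finset.sum_neg_distrib]
    exact Finset.sum_congr rfl fun j _ => (abs_of_nonpos (hk j)).symm

theorem ENNReal.tsum_rpow_one_div_le_mul {ι : Type*} {a b : ι → ℝ≥0∞} {c : ℝ≥0∞} {p : ℝ}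
    (hp : 0 < p) (hab : ∀ i, a i ≤ c ^ p * b i) :
    (∑' i, a i) ^ (1 / p) ≤ c * (∑' i, b i) ^ (1 / p) := by
  have hsum : ∑' i, a i ≤ c ^ p * ∑' i, b i := by
    rw [← ENNReal.tsum_mul_left]; exact ENNReal.tsum_le_tsum hab
  calc (∑' i, a i) ^ (1 / p) ≤ (c ^ p * ∑' i, b i) ^ (1 / p) :=
        ENNReal.rpow_le_rpow hsum (by positivity)
    _ = c * (∑' i, b i) ^ (1 / p) := by
        rw [ENNReal.mul_rpow_of_nonneg _ _ (by positivity), ← ENNReal.rpow_mul,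
          mul_one_div_cancel hp.ne', ENNReal.rpow_one]

theorem ENNReal.ofReal_rpow_le_ofReal_rpow_mul {x y c p : ℝ} (hx : 0 ≤ x) (hy : 0 ≤ y)
    (hc : 0 ≤ c) (hp : 0 ≤ p) (h : x ≤ c * y) :
    ENNReal.ofReal (x ^ p) ≤ ENNReal.ofReal c ^ p * ENNReal.ofReal (y ^ p) := by
  rw [ENNReal.ofReal_rpow_of_nonneg hc hp, ← ENNReal.ofReal_mul (by positivity),
    ← Real.mul_rpow hc hy]
  exact ENNReal.ofReal_le_ofReal (Real.rpow_le_rpow hx h hp)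

theorem norm1_le_mul_norm_one_sub_exp {d : ℕ} {k : Fin d → ℤ}
    (hk : (∀ j, 0 ≤ k j) ∨ (∀ j, k j ≤ 0)) {h : ℝ} (hh : 0 < h) (hkh : h * norm1 k ≤ π) :
    (norm1 k : ℝ) ≤ π / (2 * h) * ‖1 - Complex.exp (Complex.I * h * diagSum k)‖ := by
  have habs : |h * diagSum k| = h * norm1 k := by
    rw [abs_mul, abs_of_pos hh, ← Int.cast_abs, abs_diagSum_eq_norm1 hk, Int.cast_natCast]
  have hbound := mul_abs_le_norm_exp_I_mul_ofReal_sub_one (habs ▸ hkh)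
  have hnorm : ‖1 - Complex.exp (Complex.I * h * diagSum k)‖
      = ‖Complex.exp (Complex.I * ↑(h * diagSum k)) - 1‖ := by
    rw [norm_sub_rev]; push_cast; ring_nf
  rw [habs] at hbound
  rw [hnorm]
  calc (norm1 k : ℝ) = π / (2 * h) * (2 / π * (h * norm1 k)) := by field_simp
    _ ≤ _ := by gcongr

theorem norm1_le_pi_div_two_mul_norm_one_sub_exp {d : ℕ} {k : Fin d → ℤ}
    (hk : (∀ j, 0 ≤ k j) ∨ (∀ j, k j ≤ 0)) {n : ℕ} (hn : 0 < n) (hkn : norm1 k ≤ n) :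
    (norm1 k : ℝ) ≤ π / 2 * n * ‖1 - Complex.exp (Complex.I * ((1 / n : ℝ) : ℂ) * diagSum k)‖ := by
  have hn0 : (0 : ℝ) < n := by exact_mod_cast hn
  have hphase : 1 / (n : ℝ) * norm1 k ≤ π := by
    have : (norm1 k : ℝ) ≤ n := by exact_mod_cast hkn
    rw [one_div_mul_eq_div, div_le_iff₀ hn0]
    nlinarith [Real.pi_gt_three]
  have hscale : π / (2 * (1 / n)) = π / 2 * n := by field_simp
  simpa only [hscale] using norm1_le_mul_norm_one_sub_exp hk (by positivity) hphase

theorem stmt_3_general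
    {d : ℕ} {p : ℝ} (hp : 1 ≤ p)
    (f : (Fin d → ℝ) → ℂ)
    (ω : ℝ → ℝ)
    (hY : ∀ k : Fin d → ℤ, ¬ ((∀ j, 0 ≤ k j) ∨ (∀ j, k j < 0)) → fCoeff f k = 0)
    (hD :
      ∃ C > (0:ℝ), ∃ δ > (0:ℝ), ∀ h : ℝ, 0 < |h| → |h| < δ →
      (∑' k : Fin d → ℤ,
          ENNReal.ofReal ((‖fCoeff f k‖ * ‖1 - Complex.exp (Complex.I * (h : ℂ) * (diagSum k : ℂ))‖) ^ p)) ^ (1/p)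
        ≤ ENNReal.ofReal (C * ω |h|))
    :
    ∃ C > (0:ℝ), ∃ N : ℕ, ∀ n : ℕ, N ≤ n →
      (∑' k : Fin d → ℤ, if 1 ≤ norm1 k ∧ norm1 k ≤ n then
          ENNReal.ofReal (((norm1 k : ℝ) * ‖fCoeff f k‖) ^ p) else 0) ^ (1/p)
        ≤ ENNReal.ofReal (C * (n : ℝ) * ω (1 / (n : ℝ))) := by
  obtain ⟨C, hC, δ, hδ, hD⟩ := hD
  obtain ⟨N, hN⟩ := exists_nat_one_div_lt hδ
  refine ⟨π / 2 * C, by positivity, N + 1, fun n hn => ?_⟩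
  have hn0 : 0 < n := (Nat.succ_pos N).trans_le hn
  have hnδ : 1 / (n : ℝ) < δ :=
    lt_of_le_of_lt (one_div_le_one_div_of_le (by positivity) (by exact_mod_cast hn)) hN
  have hterm : ∀ k : Fin d → ℤ, (if 1 ≤ norm1 k ∧ norm1 k ≤ n then
      ENNReal.ofReal (((norm1 k : ℝ) * ‖fCoeff f k‖) ^ p) else 0) ≤
      ENNReal.ofReal (π / 2 * n) ^ p * ENNReal.ofReal ((‖fCoeff f k‖ *
        ‖1 - Complex.exp (Complex.I * ((1 / n : ℝ) : ℂ) * (diagSum k : ℂ))‖) ^ p) := by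
    intro k
    split_ifs with hk
    · by_cases hkY : (∀ j, 0 ≤ k j) ∨ (∀ j, k j < 0)
      · have hbound := norm1_le_pi_div_two_mul_norm_one_sub_exp
          (hkY.imp_right fun h j => (h j).le) hn0 hk.2
        refine ENNReal.ofReal_rpow_le_ofReal_rpow_mul (by positivity) (by positivity)
          (by positivity) (by positivity) ?_
        calc (norm1 k : ℝ) * ‖fCoeff f k‖ ≤ _ :=
            mul_le_mul_of_nonneg_right hbound (norm_nonneg _)
          _ = _ := by ring
      · simp [hY k hkY, Real.zero_rpow (by positivity : p ≠ 0)]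
    · exact zero_le
  calc _ ≤ ENNReal.ofReal (π / 2 * n) * _ :=
        ENNReal.tsum_rpow_one_div_le_mul (by positivity) hterm
    _ ≤ ENNReal.ofReal (π / 2 * n) * ENNReal.ofReal (C * ω (1 / n)) := by
        gcongr
        simpa [abs_of_pos (by positivity : (0 : ℝ) < 1 / n)] using
          hD (1 / n) (by positivity) (by simpa using hnδ)
    _ = _ := by rw [← ENNReal.ofReal_mul (by positivity)]; ring_nf

theorem stmt_3
    {d : ℕ} (hd : 1 ≤ d) {p : ℝ} (hp : 1 ≤ p)
    (f : (Fin d → ℝ) → ℂ)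
    (hper : ∀ (x : Fin d → ℝ) (j : Fin d), f (Function.update x j (x j + 2 * Real.pi)) = f x)
    (hint : IntegrableOn f (Set.Icc (0 : Fin d → ℝ) (fun _ => 2 * Real.pi)))
    (ω : ℝ → ℝ)
    (hωc : ContinuousOn ω (Set.Icc 0 1)) (hωm : MonotoneOn ω (Set.Icc 0 1))
    (hω0 : ω 0 = 0) (hωpos : ∀ t ∈ Set.Ioc (0:ℝ) 1, 0 < ω t)
    (hY : ∀ k : Fin d → ℤ, ¬ ((∀ j, 0 ≤ k j) ∨ (∀ j, k j < 0)) → fCoeff f k = 0)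
    (hD :
      ∃ C > (0:ℝ), ∃ δ > (0:ℝ), ∀ h : ℝ, 0 < |h| → |h| < δ →
      (∑' k : Fin d → ℤ,
          ENNReal.ofReal ((‖fCoeff f k‖ * ‖1 - Complex.exp (Complex.I * (h : ℂ) * (diagSum k : ℂ))‖) ^ p)) ^ (1/p)
        ≤ ENNReal.ofReal (C * ω |h|))
    :
    ∃ C > (0:ℝ), ∃ N : ℕ, ∀ n : ℕ, N ≤ n →
      (∑' k : Fin d → ℤ, if 1 ≤ norm1 k ∧ norm1 k ≤ n then
          ENNReal.ofReal (((norm1 k : ℝ) * ‖fCoeff f k‖) ^ p) else 0) ^ (1/p)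
        ≤ ENNReal.ofReal (C * (n : ℝ) * ω (1 / (n : ℝ))) :=
  stmt_3_general hp f ω hY hD
end

section
/- (Theorem 1, implication 1)⇒2)) Let r ≥ 1 be an integer. Suppose that E_A(ρ) := (∑_{k∈ℤ^d, |k|₁≥r} (∑_{j=r}^{|k|₁} C(|k|₁,j)(1−ρ)^j ρ^{|k|₁−j})^p |f̂(k)|^p)^{1/p} satisfies E_A(ρ) = O((1−ρ)^{r−1}·ω(1−ρ)) as ρ→1⁻, i.e., there exist C>0 and δ∈(0,1) such that E_A(ρ) ≤ C(1−ρ)^{r−1}ω(1−ρ) for all ρ∈(1−δ,1). Then Q_r(ρ) := (∑_{|k|₁≥r} (|k|₁!/(|k|₁−r)!)^p ρ^{p|k|₁} |f̂(k)|^p)^{1/p} satisfies Q_r(ρ) = O(ω(1−ρ)/(1−ρ)) as ρ→1⁻. -/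
/-!
Since `1 - λ_{ν,r}(ρ)` is a sum of nonnegative binomial terms, it dominates its first term
`C(ν,r) (1-ρ)^r ρ^(ν-r) ≥ C(ν,r) (1-ρ)^r ρ^ν`. Multiplying by `r! / (1-ρ)^r` turns this into
`ν!/(ν-r)! · ρ^ν ≤ r!/(1-ρ)^r · (1 - λ_{ν,r}(ρ))`, so coefficientwise, and hence in `ℓ^p`,
`Q_r(ρ) ≤ r! (1-ρ)^(-r) E_A(ρ) ≤ C r! ω(1-ρ)/(1-ρ)`.
-/

open scoped Real ENNReal
open MeasureTheory

open Finset Nat in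
theorem descFactorial_mul_pow_le_div_mul_sum_choose {ν r : ℕ} (hrν : r ≤ ν) {ρ t : ℝ}
    (hρ0 : 0 ≤ ρ) (hρ1 : ρ ≤ 1) (ht : 0 < t) :
    (ν.descFactorial r : ℝ) * ρ ^ ν
      ≤ r ! / t ^ r * ∑ j ∈ Icc r ν, (ν.choose j : ℝ) * t ^ j * ρ ^ (ν - j) := by
  have hfirst : (ν.choose r : ℝ) * t ^ r * ρ ^ (ν - r)
      ≤ ∑ j ∈ Icc r ν, (ν.choose j : ℝ) * t ^ j * ρ ^ (ν - j) :=
    single_le_sum (f := fun j => (ν.choose j : ℝ) * t ^ j * ρ ^ (ν - j))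
      (fun j _ => by positivity) (mem_Icc.mpr ⟨le_rfl, hrν⟩)
  calc (ν.descFactorial r : ℝ) * ρ ^ ν
      = r ! / t ^ r * ((ν.choose r : ℝ) * t ^ r * ρ ^ ν) := by
        rw [descFactorial_eq_factorial_mul_choose]; push_cast; field_simp
    _ ≤ r ! / t ^ r * ((ν.choose r : ℝ) * t ^ r * ρ ^ (ν - r)) := by
        gcongr _ * (_ * ?_)
        exact pow_le_pow_of_le_one hρ0 hρ1 (Nat.sub_le ν r)
    _ ≤ _ := by gcongr

theorem tsum_ofReal_rpow_rpow_le_mul {ι : Type*} (P : ι → Prop) [DecidablePred P]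
    {a b : ι → ℝ} {K p : ℝ} (hK : 0 < K) (hp : 0 < p)
    (ha : ∀ i, P i → 0 ≤ a i) (hab : ∀ i, P i → a i ≤ K * b i) :
    (∑' i, if P i then ENNReal.ofReal (a i ^ p) else 0) ^ (1 / p)
      ≤ ENNReal.ofReal K * (∑' i, if P i then ENNReal.ofReal (b i ^ p) else 0) ^ (1 / p) := by
  have hterm : ∀ i, (if P i then ENNReal.ofReal (a i ^ p) else 0)
      ≤ ENNReal.ofReal (K ^ p) * (if P i then ENNReal.ofReal (b i ^ p) else 0) := by
    intro i
    split_ifs with hi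
    · have hb : 0 ≤ b i := nonneg_of_mul_nonneg_right ((ha i hi).trans (hab i hi)) hK
      rw [← ENNReal.ofReal_mul (by positivity), ← Real.mul_rpow hK.le hb]
      exact ENNReal.ofReal_le_ofReal (Real.rpow_le_rpow (ha i hi) (hab i hi) hp.le)
    · simp
  calc (∑' i, if P i then ENNReal.ofReal (a i ^ p) else 0) ^ (1 / p)
      ≤ (ENNReal.ofReal (K ^ p) * ∑' i, if P i then ENNReal.ofReal (b i ^ p) else 0) ^ (1 / p) := by
        rw [← ENNReal.tsum_mul_left]
        gcongr with i
        exact hterm i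
    _ = _ := by
        rw [ENNReal.mul_rpow_of_nonneg _ _ (by positivity),
          ← ENNReal.ofReal_rpow_of_nonneg hK.le hp.le, ← ENNReal.rpow_mul,
          mul_one_div_cancel hp.ne', ENNReal.rpow_one]

theorem stmt_4_general
    {d : ℕ} {p : ℝ} (hp : 1 ≤ p)
    (f : (Fin d → ℝ) → ℂ)
    (ω : ℝ → ℝ)
    (r : ℕ) (hr : 1 ≤ r)
    (hEA :
      ∃ C > (0:ℝ), ∃ δ : ℝ, 0 < δ ∧ δ < 1 ∧ ∀ ρ : ℝ, 1 - δ < ρ → ρ < 1 →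
      (∑' k : Fin d → ℤ, if r ≤ norm1 k then
          ENNReal.ofReal (((∑ j ∈ Finset.Icc r (norm1 k),
            (Nat.choose (norm1 k) j : ℝ) * (1 - ρ) ^ j * ρ ^ (norm1 k - j)) * ‖fCoeff f k‖) ^ p)
          else 0) ^ (1/p)
        ≤ ENNReal.ofReal (C * (1 - ρ) ^ (r - 1) * ω (1 - ρ)))
    :
    ∃ C > (0:ℝ), ∃ δ : ℝ, 0 < δ ∧ δ < 1 ∧ ∀ ρ : ℝ, 1 - δ < ρ → ρ < 1 →
      (∑' k : Fin d → ℤ, if r ≤ norm1 k then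
          ENNReal.ofReal (((Nat.descFactorial (norm1 k) r : ℝ) * ρ ^ (norm1 k) * ‖fCoeff f k‖) ^ p)
          else 0) ^ (1/p)
        ≤ ENNReal.ofReal (C * (ω (1 - ρ) / (1 - ρ))) := by
  obtain ⟨C, hC, δ, hδ0, hδ1, hE⟩ := hEA
  refine ⟨C * r.factorial, by positivity, δ, hδ0, hδ1, fun ρ hρδ hρ1 => ?_⟩
  have hρ0 : 0 ≤ ρ := by linarith
  have ht : 0 < 1 - ρ := by linarith
  calc _ ≤ ENNReal.ofReal (r.factorial / (1 - ρ) ^ r) * (∑' k : Fin d → ℤ, if r ≤ norm1 k then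
          ENNReal.ofReal (((∑ j ∈ Finset.Icc r (norm1 k),
            (Nat.choose (norm1 k) j : ℝ) * (1 - ρ) ^ j * ρ ^ (norm1 k - j)) * ‖fCoeff f k‖) ^ p)
          else 0) ^ (1/p) := by
        refine tsum_ofReal_rpow_rpow_le_mul _ (by positivity) (by linarith)
          (fun k _ => by positivity) (fun k hk => ?_)
        rw [← mul_assoc]
        gcongr ?_ * _
        exact descFactorial_mul_pow_le_div_mul_sum_choose hk hρ0 hρ1.le ht
    _ ≤ ENNReal.ofReal (r.factorial / (1 - ρ) ^ r)
          * ENNReal.ofReal (C * (1 - ρ) ^ (r - 1) * ω (1 - ρ)) := by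
        gcongr
        exact hE ρ hρδ hρ1
    _ = ENNReal.ofReal (C * r.factorial * (ω (1 - ρ) / (1 - ρ))) := by
        rw [← ENNReal.ofReal_mul (by positivity)]
        obtain ⟨s, rfl⟩ : ∃ s, r = s + 1 := ⟨r - 1, by omega⟩
        rw [Nat.add_sub_cancel, pow_succ]
        field_simp

theorem stmt_4
    {d : ℕ} (hd : 1 ≤ d) {p : ℝ} (hp : 1 ≤ p)
    (f : (Fin d → ℝ) → ℂ)
    (hper : ∀ (x : Fin d → ℝ) (j : Fin d), f (Function.update x j (x j + 2 * Real.pi)) = f x)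
    (hint : IntegrableOn f (Set.Icc (0 : Fin d → ℝ) (fun _ => 2 * Real.pi)))
    (ω : ℝ → ℝ)
    (hωc : ContinuousOn ω (Set.Icc 0 1)) (hωm : MonotoneOn ω (Set.Icc 0 1))
    (hω0 : ω 0 = 0) (hωpos : ∀ t ∈ Set.Ioc (0:ℝ) 1, 0 < ω t)
    (r : ℕ) (hr : 1 ≤ r)
    (hEA :
      ∃ C > (0:ℝ), ∃ δ : ℝ, 0 < δ ∧ δ < 1 ∧ ∀ ρ : ℝ, 1 - δ < ρ → ρ < 1 →
      (∑' k : Fin d → ℤ, if r ≤ norm1 k then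
          ENNReal.ofReal (((∑ j ∈ Finset.Icc r (norm1 k),
            (Nat.choose (norm1 k) j : ℝ) * (1 - ρ) ^ j * ρ ^ (norm1 k - j)) * ‖fCoeff f k‖) ^ p)
          else 0) ^ (1/p)
        ≤ ENNReal.ofReal (C * (1 - ρ) ^ (r - 1) * ω (1 - ρ)))
    :
    ∃ C > (0:ℝ), ∃ δ : ℝ, 0 < δ ∧ δ < 1 ∧ ∀ ρ : ℝ, 1 - δ < ρ → ρ < 1 →
      (∑' k : Fin d → ℤ, if r ≤ norm1 k then
          ENNReal.ofReal (((Nat.descFactorial (norm1 k) r : ℝ) * ρ ^ (norm1 k) * ‖fCoeff f k‖) ^ p)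
          else 0) ^ (1/p)
        ≤ ENNReal.ofReal (C * (ω (1 - ρ) / (1 - ρ))) :=
  stmt_4_general hp f ω r hr hEA
end

section
/- (Theorem 1, implication 2)⇒1)) Let r ≥ 1 be an integer. Suppose that Q_r(ρ) := (∑_{k∈ℤ^d, |k|₁≥r} (|k|₁!/(|k|₁−r)!)^p ρ^{p|k|₁} |f̂(k)|^p)^{1/p} satisfies Q_r(ρ) = O(ω(1−ρ)/(1−ρ)) as ρ→1⁻. Then E_A(ρ) := (∑_{|k|₁≥r} (∑_{j=r}^{|k|₁} C(|k|₁,j)(1−ρ)^j ρ^{|k|₁−j})^p |f̂(k)|^p)^{1/p} satisfies E_A(ρ) = O((1−ρ)^{r−1}·ω(1−ρ)) as ρ→1⁻. -/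
open scoped Real ENNReal
open MeasureTheory

/-!
Write `t = 1 - ρ`. The multiplier `∑_{j=r}^{n} C(n,j) t^j ρ^(n-j)` is a binomial tail, hence at
most `min 1 (C(n,r) t^r)`. On the low frequencies `n ≤ 1/(2t)` Bernoulli gives `2 ρ^n ≥ 1`, so they
contribute at most `2 t^r Q_r(ρ) ≲ t^(r-1) ω(t)`. The high frequencies are cut into dyadic blocks
`N 2^l ≤ n < N 2^(l+1)` with `N ≈ 1/(2t)`. On block `l`, with `θ_l = 1/(4 N 2^l)`, the multiplier
`1` is at most `2 (8 θ_l)^r n!/(n-r)! (1 - θ_l)^n`, so the block contributes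
`≲ θ_l^r Q_r(1 - θ_l) ≲ θ_l^(r-1) ω(θ_l)`. The `ℓ^p` norm of the union is at most the sum of the
block norms, and condition (B) bounds `∑_l ω(θ_l)` by `O(ω(θ_0))`, where `θ_0 ≤ t`.
-/

open Finset

theorem ENNReal.tsum_rpow_le_rpow_tsum {α : Type*} {p : ℝ} (hp : 1 ≤ p) (a : α → ℝ≥0∞) :
    ∑' i, a i ^ p ≤ (∑' i, a i) ^ p := by
  have hfin : ∀ s : Finset α, ∑ i ∈ s, a i ^ p ≤ (∑ i ∈ s, a i) ^ p := by
    intro s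
    induction s using Finset.cons_induction with
    | empty => simp [ENNReal.zero_rpow_of_pos (zero_lt_one.trans_le hp)]
    | cons i s hi ih =>
      rw [sum_cons, sum_cons]
      exact (add_le_add_right ih _).trans (ENNReal.add_rpow_le_rpow_add _ _ hp)
  rw [ENNReal.tsum_eq_iSup_sum]
  exact iSup_le fun s => (hfin s).trans (by gcongr; exact ENNReal.sum_le_tsum s)

section LpNormOn

variable {ι : Type*} {p : ℝ}

noncomputable def lpNormOn (p : ℝ) (P : ι → Prop) [DecidablePred P] (a : ι → ℝ) : ℝ≥0∞ :=
  (∑' k, if P k then ENNReal.ofReal (a k ^ p) else 0) ^ (1 / p)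

theorem lpNormOn_le_ofReal_mul {P Q : ι → Prop} [DecidablePred P] [DecidablePred Q]
    {a b : ι → ℝ} {c : ℝ} (hp : 0 < p) (hc : 0 ≤ c) (hPQ : ∀ k, P k → Q k)
    (ha : ∀ k, P k → 0 ≤ a k) (hb : ∀ k, P k → 0 ≤ b k) (hab : ∀ k, P k → a k ≤ c * b k) :
    lpNormOn p P a ≤ ENNReal.ofReal c * lpNormOn p Q b := by
  have hsum : (∑' k, if P k then ENNReal.ofReal (a k ^ p) else 0)
      ≤ ENNReal.ofReal c ^ p * ∑' k, if Q k then ENNReal.ofReal (b k ^ p) else 0 := by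
    rw [← ENNReal.tsum_mul_left]
    refine ENNReal.tsum_le_tsum fun k => ?_
    split_ifs with hP hQ
    · rw [ENNReal.ofReal_rpow_of_nonneg hc hp.le, ← ENNReal.ofReal_mul (by positivity),
        ← Real.mul_rpow hc (hb k hP)]
      gcongr
      exacts [ha k hP, hab k hP]
    · exact absurd (hPQ k hP) hQ
    all_goals exact zero_le
  calc lpNormOn p P a
      ≤ (ENNReal.ofReal c ^ p * ∑' k, if Q k then ENNReal.ofReal (b k ^ p) else 0) ^ (1 / p) := by
        unfold lpNormOn; gcongr
    _ = ENNReal.ofReal c * lpNormOn p Q b := by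
        rw [lpNormOn, ENNReal.mul_rpow_of_nonneg _ _ (by positivity), ← ENNReal.rpow_mul,
          mul_one_div_cancel hp.ne', ENNReal.rpow_one]

theorem lpNormOn_le_add {P P₁ P₂ : ι → Prop} [DecidablePred P] [DecidablePred P₁]
    [DecidablePred P₂] {a : ι → ℝ} (hp : 1 ≤ p) (h : ∀ k, P k → P₁ k ∨ P₂ k) :
    lpNormOn p P a ≤ lpNormOn p P₁ a + lpNormOn p P₂ a := by
  have hsum : (∑' k, if P k then ENNReal.ofReal (a k ^ p) else 0)
      ≤ (∑' k, if P₁ k then ENNReal.ofReal (a k ^ p) else 0)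
        + ∑' k, if P₂ k then ENNReal.ofReal (a k ^ p) else 0 := by
    rw [← ENNReal.tsum_add]
    refine ENNReal.tsum_le_tsum fun k => ?_
    by_cases hP : P k
    · rcases h k hP with h₁ | h₂ <;> simp [*]
    · simp [hP]
  unfold lpNormOn
  calc _ ≤ _ := ENNReal.rpow_le_rpow hsum (by positivity)
    _ ≤ _ := ENNReal.rpow_add_le_add_rpow _ _ (by positivity) (by rw [div_le_one] <;> linarith)

theorem lpNormOn_le_tsum {P : ι → Prop} {R : ℕ → ι → Prop} [DecidablePred P]
    [∀ l, DecidablePred (R l)] {a : ι → ℝ} (hp : 1 ≤ p) (h : ∀ k, P k → ∃ l, R l k) :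
    lpNormOn p P a ≤ ∑' l, lpNormOn p (R l) a := by
  set x : ℕ → ℝ≥0∞ := fun l => ∑' k, if R l k then ENNReal.ofReal (a k ^ p) else 0
  have hp0 : 0 < p := zero_lt_one.trans_le hp
  have hsum : (∑' k, if P k then ENNReal.ofReal (a k ^ p) else 0) ≤ ∑' l, x l := by
    rw [ENNReal.tsum_comm]
    refine ENNReal.tsum_le_tsum fun k => ?_
    split_ifs with hP
    · obtain ⟨l, hl⟩ := h k hP
      exact le_trans (by simp [hl]) (ENNReal.le_tsum l)
    · exact zero_le
  have hroot : (∑' l, x l) = ∑' l, (x l ^ (1 / p)) ^ p := by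
    simp_rw [← ENNReal.rpow_mul, one_div_mul_cancel hp0.ne', ENNReal.rpow_one]
  calc lpNormOn p P a ≤ (∑' l, x l) ^ (1 / p) := by unfold lpNormOn; gcongr
    _ ≤ ((∑' l, x l ^ (1 / p)) ^ p) ^ (1 / p) := by
        rw [hroot]; gcongr; exact ENNReal.tsum_rpow_le_rpow_tsum hp _
    _ = ∑' l, lpNormOn p (R l) a := by
        rw [← ENNReal.rpow_mul, mul_one_div_cancel hp0.ne', ENNReal.rpow_one]; rfl

end LpNormOn

theorem sum_Icc_choose_mul_pow_le_one {r n : ℕ} {x y : ℝ} (hx : 0 ≤ x) (hy : 0 ≤ y)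
    (hxy : x + y ≤ 1) :
    ∑ j ∈ Icc r n, (n.choose j : ℝ) * x ^ j * y ^ (n - j) ≤ 1 := by
  calc ∑ j ∈ Icc r n, (n.choose j : ℝ) * x ^ j * y ^ (n - j)
      ≤ ∑ j ∈ range (n + 1), (n.choose j : ℝ) * x ^ j * y ^ (n - j) := by
        refine sum_le_sum_of_subset_of_nonneg (fun j hj => ?_) (fun _ _ _ => by positivity)
        simp only [mem_Icc, mem_range] at hj ⊢; omega
    _ = (x + y) ^ n := by rw [add_pow]; exact sum_congr rfl fun _ _ => by ring
    _ ≤ 1 := pow_le_one₀ (by positivity) hxy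

/-- `C(n, j) ≤ C(n, r) C(n - r, j - r)`, and the remaining sum is `(x + y) ^ (n - r)`. -/
theorem sum_Icc_choose_mul_pow_le {r n : ℕ} (hrn : r ≤ n) {x y : ℝ} (hx : 0 ≤ x) (hy : 0 ≤ y)
    (hxy : x + y ≤ 1) :
    ∑ j ∈ Icc r n, (n.choose j : ℝ) * x ^ j * y ^ (n - j) ≤ n.choose r * x ^ r := by
  have hchoose : ∀ i, (n.choose (r + i) : ℝ) ≤ n.choose r * (n - r).choose i := fun i => by
    have := Nat.choose_mul (n := n) (Nat.le_add_right r i)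
    rw [Nat.add_sub_cancel_left] at this
    exact_mod_cast
      (Nat.le_mul_of_pos_right _ (Nat.choose_pos (Nat.le_add_right r i))).trans_eq this
  calc ∑ j ∈ Icc r n, (n.choose j : ℝ) * x ^ j * y ^ (n - j)
      = ∑ i ∈ range (n - r + 1), (n.choose (r + i) : ℝ) * x ^ (r + i) * y ^ (n - r - i) := by
        rw [← Finset.Ico_add_one_right_eq_Icc, sum_Ico_eq_sum_range, Nat.sub_add_comm hrn]
        exact sum_congr rfl fun i _ => by rw [Nat.sub_sub]
    _ ≤ ∑ i ∈ range (n - r + 1),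
          n.choose r * x ^ r * ((n - r).choose i * x ^ i * y ^ (n - r - i)) := by
        refine sum_le_sum fun i _ => ?_
        calc (n.choose (r + i) : ℝ) * x ^ (r + i) * y ^ (n - r - i)
            ≤ (n.choose r * (n - r).choose i) * x ^ (r + i) * y ^ (n - r - i) := by
              gcongr; exact hchoose i
          _ = _ := by ring
    _ = n.choose r * x ^ r * (x + y) ^ (n - r) := by
        rw [← mul_sum, add_pow]; congr 1; exact sum_congr rfl fun _ _ => by ring
    _ ≤ n.choose r * x ^ r :=
        mul_le_of_le_one_right (by positivity) (pow_le_one₀ (by positivity) hxy)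

theorem one_le_two_mul_one_sub_pow {θ : ℝ} {n : ℕ} (hθ : 0 ≤ θ) (hnθ : n * θ ≤ 1 / 2) :
    1 ≤ 2 * (1 - θ) ^ n := by
  rcases Nat.eq_zero_or_pos n with rfl | hn
  · norm_num
  have hθn : θ ≤ n * θ := le_mul_of_one_le_left hθ (by exact_mod_cast hn)
  have := one_add_mul_le_pow (a := -θ) (by linarith) n
  rw [← sub_eq_add_neg] at this
  linarith

theorem pow_le_two_pow_mul_descFactorial {n r : ℕ} (h : 2 * r ≤ n + 2) :
    n ^ r ≤ 2 ^ r * n.descFactorial r := by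
  calc n ^ r ≤ (2 * (n + 1 - r)) ^ r := Nat.pow_le_pow_left (by omega) r
    _ = 2 ^ r * (n + 1 - r) ^ r := mul_pow _ _ _
    _ ≤ 2 ^ r * n.descFactorial r := Nat.mul_le_mul_left _ (Nat.pow_sub_le_descFactorial n r)

theorem exists_mul_two_pow_le_lt {N m : ℕ} (hN : 0 < N) (hNm : N ≤ m) :
    ∃ l, N * 2 ^ l ≤ m ∧ m < 2 * (N * 2 ^ l) := by
  have hq : m / N ≠ 0 := (Nat.div_pos hNm hN).ne'
  refine ⟨Nat.log 2 (m / N), ?_, ?_⟩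
  · calc N * 2 ^ Nat.log 2 (m / N) ≤ N * (m / N) :=
          Nat.mul_le_mul_left _ (Nat.pow_log_le_self 2 hq)
      _ ≤ m := Nat.mul_div_le m N
  · have := Nat.lt_pow_succ_log_self one_lt_two (m / N)
    rw [Nat.div_lt_iff_lt_mul hN, pow_succ] at this
    linarith

theorem exists_nat_ge_mul_le_half {t : ℝ} (ht : 0 < t) {L : ℕ} (hL : 1 ≤ L)
    (hLt : L * t ≤ 1 / 2) :
    ∃ N : ℕ, L ≤ N ∧ N * t ≤ 1 / 2 ∧ 1 / (4 * N : ℝ) ≤ t := by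
  have hLN : L ≤ ⌊1 / (2 * t)⌋₊ := Nat.le_floor (by rw [le_div_iff₀ (by positivity)]; linarith)
  refine ⟨⌊1 / (2 * t)⌋₊, hLN, ?_, ?_⟩
  · have := Nat.floor_le (a := 1 / (2 * t)) (by positivity)
    rw [le_div_iff₀ (by positivity)] at this; linarith
  · have hfloor := Nat.lt_floor_add_one (1 / (2 * t))
    have hN : (1 : ℝ) ≤ ⌊1 / (2 * t)⌋₊ := by exact_mod_cast hL.trans hLN
    rw [div_lt_iff₀ (by positivity)] at hfloor
    rw [div_le_iff₀ (by positivity)]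
    nlinarith

section Modulus

variable {ω : ℝ → ℝ}

/-- Condition (B) of the paper; the sum over `v > n` is indexed by `v - n - 1`. -/
def ConditionB (ω : ℝ → ℝ) (C₀ : ℝ) (N₀ : ℕ) : Prop :=
  ∀ n : ℕ, N₀ ≤ n →
    (∑' v : ℕ, ENNReal.ofReal (ω (1 / ((n : ℝ) + 1 + (v : ℝ))) / ((n : ℝ) + 1 + (v : ℝ))))
      ≤ ENNReal.ofReal (C₀ * ω (1 / (n : ℝ)))

theorem MonotoneOn.nonneg_of_map_zero (hωm : MonotoneOn ω (Set.Icc 0 1)) (hω0 : ω 0 = 0)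
    {x : ℝ} (hx : x ∈ Set.Icc 0 1) : 0 ≤ ω x :=
  hω0 ▸ hωm ⟨le_rfl, zero_le_one⟩ hx hx.1

theorem one_div_natCast_mem_Icc {v : ℕ} (hv : 1 ≤ v) : (1 / v : ℝ) ∈ Set.Icc 0 1 :=
  ⟨by positivity, div_le_one_of_le₀ (by exact_mod_cast hv) (by positivity)⟩

/-- Schlömilch condensation with `u k = M 2^k`: the term `ω (1 / (M 2^(k+1)))` is at most twice
the block `∑_{M 2^k < v ≤ M 2^(k+1)} ω (1/v) / v`. -/
theorem tsum_ofReal_map_inv_mul_two_pow_succ_le (hωm : MonotoneOn ω (Set.Icc 0 1))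
    (hω0 : ω 0 = 0) {C₀ : ℝ} {N₀ M : ℕ} (hB : ConditionB ω C₀ N₀) (hM₀ : N₀ ≤ M) (hM : 1 ≤ M) :
    ∑' k : ℕ, ENNReal.ofReal (ω (1 / ((M : ℝ) * 2 ^ (k + 1))))
      ≤ 2 * ENNReal.ofReal (C₀ * ω (1 / M)) := by
  set f : ℕ → ℝ≥0∞ := fun v => ENNReal.ofReal (ω (1 / v) / v)
  set u : ℕ → ℕ := fun k => M * 2 ^ k
  have hf : ∀ ⦃a b : ℕ⦄, 1 < a → a ≤ b → f b ≤ f a := fun a b ha hab => by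
    have hab' : (a : ℝ) ≤ b := by exact_mod_cast hab
    refine ENNReal.ofReal_le_ofReal (div_le_div₀ ?_ ?_ (by positivity) hab')
    · exact hωm.nonneg_of_map_zero hω0 (one_div_natCast_mem_Icc ha.le)
    · exact hωm (one_div_natCast_mem_Icc (by omega)) (one_div_natCast_mem_Icc ha.le)
        (one_div_le_one_div_of_le (by positivity) hab')
  have hu : Monotone u := fun a b hab => Nat.mul_le_mul_left _ (Nat.pow_le_pow_right two_pos hab)
  have hterm : ∀ k, ENNReal.ofReal (ω (1 / ((M : ℝ) * 2 ^ (k + 1))))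
      = 2 * ((u (k + 1) - u k) • f (u (k + 1))) := fun k => by
    have hdiff : u (k + 1) - u k = M * 2 ^ k := Nat.sub_eq_of_eq_add (by simp only [u]; ring)
    have hω : 0 ≤ ω (1 / ((M : ℝ) * 2 ^ (k + 1))) := hωm.nonneg_of_map_zero hω0
      (by simpa using one_div_natCast_mem_Icc (Nat.mul_pos hM (by positivity : 0 < 2 ^ (k + 1))))
    rw [hdiff, nsmul_eq_mul, ← ENNReal.ofReal_natCast, ← ENNReal.ofReal_ofNat 2,
      ← ENNReal.ofReal_mul (by positivity), ← ENNReal.ofReal_mul (by positivity)]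
    simp only [u]
    push_cast
    congr 1
    field_simp
    ring
  have htail : ∑' v : ℕ, f (M + 1 + v) ≤ ENNReal.ofReal (C₀ * ω (1 / M)) := by
    refine le_of_eq_of_le (tsum_congr fun v => ?_) (hB M hM₀)
    simp only [f]; push_cast; rfl
  rw [ENNReal.tsum_eq_iSup_nat]
  refine iSup_le fun n => ?_
  simp_rw [hterm, ← mul_sum]
  gcongr
  calc _ ≤ ∑ v ∈ Ico (u 0 + 1) (u n + 1), f v := sum_schlomilch_le' hf (fun k => by positivity) hu n
    _ ≤ ∑' v : ℕ, f (M + 1 + v) := by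
        rw [sum_Ico_eq_sum_range]
        simpa [u] using ENNReal.sum_le_tsum (f := fun v => f (M + 1 + v)) _
    _ ≤ _ := htail

theorem tsum_ofReal_map_inv_mul_two_pow_le (hωm : MonotoneOn ω (Set.Icc 0 1)) (hω0 : ω 0 = 0)
    {C₀ : ℝ} (hC₀ : 0 ≤ C₀) {N₀ M : ℕ} (hB : ConditionB ω C₀ N₀) (hM₀ : N₀ ≤ M) (hM : 1 ≤ M) :
    ∑' k : ℕ, ENNReal.ofReal (ω (1 / ((M : ℝ) * 2 ^ k)))
      ≤ ENNReal.ofReal ((1 + 2 * C₀) * ω (1 / M)) := by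
  have hω : 0 ≤ ω (1 / M) := hωm.nonneg_of_map_zero hω0 (one_div_natCast_mem_Icc hM)
  calc ∑' k : ℕ, ENNReal.ofReal (ω (1 / ((M : ℝ) * 2 ^ k)))
      = ENNReal.ofReal (ω (1 / M))
        + ∑' k : ℕ, ENNReal.ofReal (ω (1 / ((M : ℝ) * 2 ^ (k + 1)))) := by
        rw [tsum_eq_zero_add' ENNReal.summable, pow_zero, mul_one]
    _ ≤ ENNReal.ofReal (ω (1 / M)) + 2 * ENNReal.ofReal (C₀ * ω (1 / M)) := by
        gcongr; exact tsum_ofReal_map_inv_mul_two_pow_succ_le hωm hω0 hB hM₀ hM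
    _ = ENNReal.ofReal ((1 + 2 * C₀) * ω (1 / M)) := by
        rw [← ENNReal.ofReal_ofNat 2, ← ENNReal.ofReal_mul (by norm_num),
          ← ENNReal.ofReal_add hω (by positivity)]
        ring_nf

end Modulus

section Estimates

variable {ι : Type*} {p : ℝ} {r : ℕ} {n : ι → ℕ} {g : ι → ℝ}

/-- The paper's `Q_r(σ)`, for coefficient moduli `g k` at frequencies of degree `n k`. -/
noncomputable def poissonDerivNorm (p : ℝ) (r : ℕ) (n : ι → ℕ) (g : ι → ℝ) (σ : ℝ) : ℝ≥0∞ :=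
  lpNormOn p (fun k => r ≤ n k) (fun k => (n k).descFactorial r * σ ^ n k * g k)

theorem one_le_mul_descFactorial_mul_one_sub_pow {M m : ℕ} (hrM : 2 * r ≤ M) (hMm : M ≤ m)
    (hm : m < 2 * M) :
    1 ≤ 2 * 8 ^ r * (1 / (4 * M : ℝ)) ^ r * (m.descFactorial r * (1 - 1 / (4 * M : ℝ)) ^ m) := by
  have hM : (0 : ℝ) < M := by exact_mod_cast (show 0 < M by omega)
  set θ : ℝ := 1 / (4 * M)
  have hpow : 1 ≤ 2 * (1 - θ) ^ m := by
    refine one_le_two_mul_one_sub_pow (by positivity) ?_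
    have : (m : ℝ) < 2 * M := by exact_mod_cast hm
    simp only [θ]; rw [mul_one_div, div_le_iff₀ (by positivity)]; linarith
  have hdesc : (M : ℝ) ^ r ≤ 2 ^ r * m.descFactorial r := by
    exact_mod_cast (Nat.pow_le_pow_left hMm r).trans (pow_le_two_pow_mul_descFactorial (by omega))
  have hscale : 1 ≤ (8 * θ) ^ r * m.descFactorial r := by
    have h8 : 8 * θ * M = 2 := by simp only [θ]; field_simp; norm_num
    refine le_of_mul_le_mul_left ?_ (by positivity : (0 : ℝ) < 2 ^ r)
    calc 2 ^ r * 1 = (8 * θ * M) ^ r := by rw [h8, mul_one]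
      _ = (8 * θ) ^ r * M ^ r := mul_pow _ _ _
      _ ≤ (8 * θ) ^ r * (2 ^ r * m.descFactorial r) := by gcongr
      _ = 2 ^ r * ((8 * θ) ^ r * m.descFactorial r) := by ring
  calc (1 : ℝ) = 1 * 1 := (mul_one 1).symm
    _ ≤ ((8 * θ) ^ r * m.descFactorial r) * (2 * (1 - θ) ^ m) :=
        mul_le_mul hscale hpow zero_le_one (by positivity)
    _ = _ := by rw [mul_pow]; ring

theorem lpNormOn_dyadicBlock_le (hp : 0 < p) (hg : ∀ k, 0 ≤ g k) {M : ℕ} (hrM : 2 * r ≤ M) :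
    lpNormOn p (fun k => M ≤ n k ∧ n k < 2 * M) g
      ≤ ENNReal.ofReal (2 * 8 ^ r * (1 / (4 * M : ℝ)) ^ r)
        * poissonDerivNorm p r n g (1 - 1 / (4 * M)) := by
  refine lpNormOn_le_ofReal_mul hp (by positivity) (fun k hk => by omega) (fun k _ => hg k)
    (fun k hk => ?_) fun k hk => ?_
  · have hM : (1 : ℝ) ≤ M := by exact_mod_cast (show 1 ≤ M by omega)
    have hσ : 0 ≤ 1 - 1 / (4 * M : ℝ) := by
      rw [sub_nonneg, div_le_one (by positivity)]; linarith
    exact mul_nonneg (mul_nonneg (Nat.cast_nonneg _) (pow_nonneg hσ _)) (hg k)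
  calc g k = 1 * g k := (one_mul _).symm
    _ ≤ _ := mul_le_mul_of_nonneg_right
        (one_le_mul_descFactorial_mul_one_sub_pow hrM hk.1 hk.2) (hg k)
    _ = _ := by ring

theorem lpNormOn_dyadicBlock_le_of_poissonDerivNorm_le (hp : 0 < p) (hr : 1 ≤ r)
    (hg : ∀ k, 0 ≤ g k) {ω : ℝ → ℝ} {C δ : ℝ}
    (hQ : ∀ σ, 1 - δ < σ → σ < 1 →
      poissonDerivNorm p r n g σ ≤ ENNReal.ofReal (C * (ω (1 - σ) / (1 - σ))))
    {M : ℕ} (hrM : 2 * r ≤ M) (hδ : 1 / (4 * M : ℝ) < δ) :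
    lpNormOn p (fun k => M ≤ n k ∧ n k < 2 * M) g
      ≤ ENNReal.ofReal (2 * 8 ^ r * C * (1 / (4 * M : ℝ)) ^ (r - 1) * ω (1 / (4 * M))) := by
  set θ : ℝ := 1 / (4 * M)
  have hM : 0 < M := by omega
  have hθ : 0 < θ := by positivity
  have hσ := hQ (1 - θ) (by linarith) (by linarith)
  rw [sub_sub_cancel] at hσ
  calc _ ≤ _ := lpNormOn_dyadicBlock_le hp hg hrM
    _ ≤ ENNReal.ofReal (2 * 8 ^ r * θ ^ r) * ENNReal.ofReal (C * (ω θ / θ)) := by gcongr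
    _ = _ := by
        rw [← ENNReal.ofReal_mul (by positivity), ← pow_sub_one_mul (by omega : r ≠ 0) θ]
        congr 1
        field_simp

theorem lpNormOn_highFreq_le (hp : 1 ≤ p) (hr : 1 ≤ r) (hg : ∀ k, 0 ≤ g k) {ω : ℝ → ℝ}
    (hωm : MonotoneOn ω (Set.Icc 0 1)) (hω0 : ω 0 = 0) {C₀ : ℝ} (hC₀ : 0 ≤ C₀) {N₀ : ℕ}
    (hB : ConditionB ω C₀ N₀) {C δ : ℝ} (hC : 0 ≤ C)
    (hQ : ∀ σ, 1 - δ < σ → σ < 1 →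
      poissonDerivNorm p r n g σ ≤ ENNReal.ofReal (C * (ω (1 - σ) / (1 - σ))))
    {N : ℕ} (hrN : 2 * r ≤ N) (hN₀ : N₀ ≤ 4 * N) (hδ : 1 / (4 * N : ℝ) < δ) :
    lpNormOn p (fun k => N ≤ n k) g
      ≤ ENNReal.ofReal (2 * 8 ^ r * C * (1 + 2 * C₀) * (1 / (4 * N : ℝ)) ^ (r - 1)
        * ω (1 / (4 * N))) := by
  have hN : 0 < N := by omega
  set θ : ℕ → ℝ := fun l => 1 / (((4 * N : ℕ) : ℝ) * 2 ^ l)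
  have hθ : ∀ l, 1 / (4 * ((N * 2 ^ l : ℕ) : ℝ)) = θ l := fun l => by
    simp only [θ]; push_cast; ring
  have hθ_le : ∀ l, θ l ≤ 1 / (4 * N : ℝ) := fun l => by
    have : (1 : ℝ) ≤ 2 ^ l := one_le_pow₀ one_le_two
    refine one_div_le_one_div_of_le (by positivity) ?_
    push_cast; nlinarith [(Nat.cast_nonneg N : (0 : ℝ) ≤ N)]
  have hθ₀ : 1 / (4 * N : ℝ) ≤ 1 := by
    rw [div_le_one (by positivity)]; norm_cast; omega
  set c : ℝ := 2 * 8 ^ r * C * (1 / (4 * N : ℝ)) ^ (r - 1)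
  have hc : 0 ≤ c := by positivity
  have hblock : ∀ l, lpNormOn p (fun k => N * 2 ^ l ≤ n k ∧ n k < 2 * (N * 2 ^ l)) g
      ≤ ENNReal.ofReal c * ENNReal.ofReal (ω (θ l)) := fun l => by
    have hω : 0 ≤ ω (θ l) :=
      hωm.nonneg_of_map_zero hω0 ⟨by positivity, (hθ_le l).trans hθ₀⟩
    have hδl : 1 / (4 * ((N * 2 ^ l : ℕ) : ℝ)) < δ := by rw [hθ]; exact (hθ_le l).trans_lt hδ
    refine (lpNormOn_dyadicBlock_le_of_poissonDerivNorm_le (zero_lt_one.trans_le hp) hr hg hQ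
      (hrN.trans (Nat.le_mul_of_pos_right N (by positivity))) hδl).trans ?_
    rw [hθ, ← ENNReal.ofReal_mul hc]
    refine ENNReal.ofReal_le_ofReal ?_
    simp only [c]; gcongr; exact hθ_le l
  calc lpNormOn p (fun k => N ≤ n k) g
      ≤ ∑' l, lpNormOn p (fun k => N * 2 ^ l ≤ n k ∧ n k < 2 * (N * 2 ^ l)) g :=
        lpNormOn_le_tsum hp fun k hk => exists_mul_two_pow_le_lt hN hk
    _ ≤ ∑' l, ENNReal.ofReal c * ENNReal.ofReal (ω (θ l)) := ENNReal.tsum_le_tsum hblock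
    _ ≤ ENNReal.ofReal c * ENNReal.ofReal ((1 + 2 * C₀) * ω (1 / ((4 * N : ℕ) : ℝ))) := by
        rw [ENNReal.tsum_mul_left]
        gcongr
        exact tsum_ofReal_map_inv_mul_two_pow_le hωm hω0 hC₀ hB hN₀ (by omega)
    _ = _ := by
        rw [← ENNReal.ofReal_mul hc]; push_cast; simp only [c]; ring_nf

theorem lpNormOn_lowFreq_le (hp : 0 < p) (hg : ∀ k, 0 ≤ g k) {ρ : ℝ} (hρ0 : 0 ≤ ρ)
    (hρ1 : ρ ≤ 1) {N : ℕ} (hN : N * (1 - ρ) ≤ 1 / 2) :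
    lpNormOn p (fun k => r ≤ n k ∧ n k < N)
        (fun k => (∑ j ∈ Icc r (n k), ((n k).choose j : ℝ) * (1 - ρ) ^ j * ρ ^ (n k - j)) * g k)
      ≤ ENNReal.ofReal (2 * (1 - ρ) ^ r) * poissonDerivNorm p r n g ρ := by
  have ht : 0 ≤ 1 - ρ := sub_nonneg.2 hρ1
  have hxy : 1 - ρ + ρ ≤ 1 := (sub_add_cancel 1 ρ).le
  refine lpNormOn_le_ofReal_mul hp (by positivity) (fun k hk => hk.1)
    (fun k _ => mul_nonneg (by positivity) (hg k)) (fun k _ => by have := hg k; positivity)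
    fun k hk => ?_
  have hpow : 1 ≤ 2 * ρ ^ n k := by
    have hnN : (n k : ℝ) ≤ N := by exact_mod_cast hk.2.le
    simpa using one_le_two_mul_one_sub_pow ht ((mul_le_mul_of_nonneg_right hnN ht).trans hN)
  suffices ∑ j ∈ Icc r (n k), ((n k).choose j : ℝ) * (1 - ρ) ^ j * ρ ^ (n k - j)
      ≤ 2 * (1 - ρ) ^ r * ((n k).descFactorial r * ρ ^ n k) by
    nlinarith [hg k]
  calc ∑ j ∈ Icc r (n k), ((n k).choose j : ℝ) * (1 - ρ) ^ j * ρ ^ (n k - j)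
      ≤ (n k).choose r * (1 - ρ) ^ r := sum_Icc_choose_mul_pow_le hk.1 ht hρ0 hxy
    _ ≤ (n k).descFactorial r * (1 - ρ) ^ r := by
        gcongr; exact_mod_cast Nat.choose_le_descFactorial _ _
    _ ≤ (n k).descFactorial r * (1 - ρ) ^ r * (2 * ρ ^ n k) :=
        le_mul_of_one_le_right (by positivity) hpow
    _ = 2 * (1 - ρ) ^ r * ((n k).descFactorial r * ρ ^ n k) := by ring

theorem lpNormOn_binomTail_mul_le {P : ι → Prop} [DecidablePred P] (hp : 0 < p)
    (hg : ∀ k, 0 ≤ g k) {ρ : ℝ} (hρ0 : 0 ≤ ρ) (hρ1 : ρ ≤ 1) :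
    lpNormOn p P
        (fun k => (∑ j ∈ Icc r (n k), ((n k).choose j : ℝ) * (1 - ρ) ^ j * ρ ^ (n k - j)) * g k)
      ≤ lpNormOn p P g := by
  have ht : 0 ≤ 1 - ρ := sub_nonneg.2 hρ1
  have hxy : 1 - ρ + ρ ≤ 1 := (sub_add_cancel 1 ρ).le
  have hA : ∀ k, 0 ≤ ∑ j ∈ Icc r (n k), ((n k).choose j : ℝ) * (1 - ρ) ^ j * ρ ^ (n k - j) :=
    fun k => sum_nonneg fun j _ => by positivity
  simpa using lpNormOn_le_ofReal_mul (c := 1) hp zero_le_one (fun _ h => h)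
    (fun k _ => mul_nonneg (hA k) (hg k)) (fun k _ => hg k) fun k _ => by
      rw [one_mul]
      exact mul_le_of_le_one_left (hg k) (sum_Icc_choose_mul_pow_le_one ht hρ0 hxy)

theorem lpNormOn_binomTail_le (hp : 1 ≤ p) (hr : 1 ≤ r) (hg : ∀ k, 0 ≤ g k) {ω : ℝ → ℝ}
    (hωm : MonotoneOn ω (Set.Icc 0 1)) (hω0 : ω 0 = 0) {C₀ : ℝ} (hC₀ : 0 ≤ C₀) {N₀ : ℕ}
    (hB : ConditionB ω C₀ N₀) {C δ : ℝ} (hC : 0 ≤ C)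
    (hQ : ∀ σ, 1 - δ < σ → σ < 1 →
      poissonDerivNorm p r n g σ ≤ ENNReal.ofReal (C * (ω (1 - σ) / (1 - σ))))
    {ρ : ℝ} (hρδ : 1 - δ < ρ) (hρ1 : ρ < 1) (hρN₀ : ((2 * r + N₀ : ℕ) : ℝ) * (1 - ρ) ≤ 1 / 2) :
    lpNormOn p (fun k => r ≤ n k)
        (fun k => (∑ j ∈ Icc r (n k), ((n k).choose j : ℝ) * (1 - ρ) ^ j * ρ ^ (n k - j)) * g k)
      ≤ ENNReal.ofReal
          ((2 * C + 2 * 8 ^ r * C * (1 + 2 * C₀)) * (1 - ρ) ^ (r - 1) * ω (1 - ρ)) := by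
  have hp0 : 0 < p := zero_lt_one.trans_le hp
  set a : ι → ℝ :=
    fun k => (∑ j ∈ Icc r (n k), ((n k).choose j : ℝ) * (1 - ρ) ^ j * ρ ^ (n k - j)) * g k
  set t := 1 - ρ with ht_def
  have ht : 0 < t := sub_pos.2 hρ1
  have ht1 : t ≤ 1 / 4 := by
    have : (2 : ℝ) ≤ ((2 * r + N₀ : ℕ) : ℝ) := by exact_mod_cast (show 2 ≤ 2 * r + N₀ by omega)
    nlinarith
  obtain ⟨N, hLN, hNt, hθt⟩ := exists_nat_ge_mul_le_half ht (by omega) hρN₀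
  set θ : ℝ := 1 / (4 * N)
  have hθ0 : 0 ≤ θ := by positivity
  have hωt : ω θ ≤ ω t := hωm ⟨hθ0, by linarith⟩ ⟨ht.le, by linarith⟩ hθt
  have hωθ : 0 ≤ ω θ := hωm.nonneg_of_map_zero hω0 ⟨hθ0, by linarith⟩
  have hωt0 : 0 ≤ ω t := hωθ.trans hωt
  have hlow : lpNormOn p (fun k => r ≤ n k ∧ n k < N) a
      ≤ ENNReal.ofReal (2 * C * t ^ (r - 1) * ω t) := by
    refine (lpNormOn_lowFreq_le hp0 hg (by linarith) hρ1.le hNt).trans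
      ((mul_le_mul' le_rfl (hQ ρ hρδ hρ1)).trans_eq ?_)
    rw [← ENNReal.ofReal_mul (by positivity), ← pow_sub_one_mul (by omega : r ≠ 0), ht_def]
    congr 1; field_simp [(sub_pos.2 hρ1).ne']
  have hhigh : lpNormOn p (fun k => N ≤ n k) a
      ≤ ENNReal.ofReal (2 * 8 ^ r * C * (1 + 2 * C₀) * t ^ (r - 1) * ω t) := by
    refine (lpNormOn_binomTail_mul_le hp0 hg (by linarith) hρ1.le).trans <|
      (lpNormOn_highFreq_le hp hr hg hωm hω0 hC₀ hB hC hQ (by omega) (by omega)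
        (by linarith)).trans (ENNReal.ofReal_le_ofReal ?_)
    rw [mul_assoc _ (θ ^ _), mul_assoc _ (t ^ _)]
    gcongr
  calc _ ≤ _ := lpNormOn_le_add hp fun k hk => (lt_or_ge (n k) N).imp (⟨hk, ·⟩) id
    _ ≤ _ := add_le_add hlow hhigh
    _ = _ := by
        rw [← ENNReal.ofReal_add (by positivity) (by positivity)]
        ring_nf

end Estimates

theorem stmt_5_general
    {d : ℕ} {p : ℝ} (hp : 1 ≤ p)
    (f : (Fin d → ℝ) → ℂ)
    (ω : ℝ → ℝ)
    (hωm : MonotoneOn ω (Set.Icc 0 1))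
    (hω0 : ω 0 = 0)
    (hB : ∃ C₀ > (0:ℝ), ∃ N₀ : ℕ, 1 ≤ N₀ ∧ ∀ n : ℕ, N₀ ≤ n →
      (∑' v : ℕ, ENNReal.ofReal (ω (1 / ((n : ℝ) + 1 + (v : ℝ))) / ((n : ℝ) + 1 + (v : ℝ))))
        ≤ ENNReal.ofReal (C₀ * ω (1 / (n : ℝ))))
    (r : ℕ) (hr : 1 ≤ r)
    (hQ :
      ∃ C > (0:ℝ), ∃ δ : ℝ, 0 < δ ∧ δ < 1 ∧ ∀ ρ : ℝ, 1 - δ < ρ → ρ < 1 →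
      (∑' k : Fin d → ℤ, if r ≤ norm1 k then
          ENNReal.ofReal (((Nat.descFactorial (norm1 k) r : ℝ) * ρ ^ (norm1 k) * ‖fCoeff f k‖) ^ p)
          else 0) ^ (1/p)
        ≤ ENNReal.ofReal (C * (ω (1 - ρ) / (1 - ρ))))
    :
    ∃ C > (0:ℝ), ∃ δ : ℝ, 0 < δ ∧ δ < 1 ∧ ∀ ρ : ℝ, 1 - δ < ρ → ρ < 1 →
      (∑' k : Fin d → ℤ, if r ≤ norm1 k then
          ENNReal.ofReal (((∑ j ∈ Finset.Icc r (norm1 k),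
            (Nat.choose (norm1 k) j : ℝ) * (1 - ρ) ^ j * ρ ^ (norm1 k - j)) * ‖fCoeff f k‖) ^ p)
          else 0) ^ (1/p)
        ≤ ENNReal.ofReal (C * (1 - ρ) ^ (r - 1) * ω (1 - ρ)) := by
  obtain ⟨C₀, hC₀, N₀, -, hB⟩ := hB
  obtain ⟨C, hC, δ, hδ0, hδ1, hQ⟩ := hQ
  set L : ℝ := ((2 * r + N₀ : ℕ) : ℝ)
  have hL : 0 < L := by positivity
  refine ⟨2 * C + 2 * 8 ^ r * C * (1 + 2 * C₀), by positivity, min δ (1 / (2 * L)),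
    lt_min hδ0 (by positivity), (min_le_left _ _).trans_lt hδ1, fun ρ hρ hρ1 => ?_⟩
  have hρδ := lt_min_iff.1 (show 1 - ρ < min δ (1 / (2 * L)) by linarith)
  refine lpNormOn_binomTail_le (n := norm1) (g := fun k => ‖fCoeff f k‖) hp hr
    (fun k => norm_nonneg _) hωm hω0 hC₀.le hB hC.le hQ (by linarith) hρ1 ?_
  have := (lt_div_iff₀ (by positivity)).1 hρδ.2
  linarith

theorem stmt_5
    {d : ℕ} (hd : 1 ≤ d) {p : ℝ} (hp : 1 ≤ p)
    (f : (Fin d → ℝ) → ℂ)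
    (hper : ∀ (x : Fin d → ℝ) (j : Fin d), f (Function.update x j (x j + 2 * Real.pi)) = f x)
    (hint : IntegrableOn f (Set.Icc (0 : Fin d → ℝ) (fun _ => 2 * Real.pi)))
    (ω : ℝ → ℝ)
    (hωc : ContinuousOn ω (Set.Icc 0 1)) (hωm : MonotoneOn ω (Set.Icc 0 1))
    (hω0 : ω 0 = 0) (hωpos : ∀ t ∈ Set.Ioc (0:ℝ) 1, 0 < ω t)
    (hB : ∃ C₀ > (0:ℝ), ∃ N₀ : ℕ, 1 ≤ N₀ ∧ ∀ n : ℕ, N₀ ≤ n →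
      (∑' v : ℕ, ENNReal.ofReal (ω (1 / ((n : ℝ) + 1 + (v : ℝ))) / ((n : ℝ) + 1 + (v : ℝ))))
        ≤ ENNReal.ofReal (C₀ * ω (1 / (n : ℝ))))
    (r : ℕ) (hr : 1 ≤ r)
    (hQ :
      ∃ C > (0:ℝ), ∃ δ : ℝ, 0 < δ ∧ δ < 1 ∧ ∀ ρ : ℝ, 1 - δ < ρ → ρ < 1 →
      (∑' k : Fin d → ℤ, if r ≤ norm1 k then
          ENNReal.ofReal (((Nat.descFactorial (norm1 k) r : ℝ) * ρ ^ (norm1 k) * ‖fCoeff f k‖) ^ p)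
          else 0) ^ (1/p)
        ≤ ENNReal.ofReal (C * (ω (1 - ρ) / (1 - ρ))))
    :
    ∃ C > (0:ℝ), ∃ δ : ℝ, 0 < δ ∧ δ < 1 ∧ ∀ ρ : ℝ, 1 - δ < ρ → ρ < 1 →
      (∑' k : Fin d → ℤ, if r ≤ norm1 k then
          ENNReal.ofReal (((∑ j ∈ Finset.Icc r (norm1 k),
            (Nat.choose (norm1 k) j : ℝ) * (1 - ρ) ^ j * ρ ^ (norm1 k - j)) * ‖fCoeff f k‖) ^ p)
          else 0) ^ (1/p)
        ≤ ENNReal.ofReal (C * (1 - ρ) ^ (r - 1) * ω (1 - ρ)) :=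
  stmt_5_general hp f ω hωm hω0 hB r hr hQ
end

section
/- (Theorem 1, implication 3)⇒1) for f ∈ L_{1,Y}) Let r ≥ 1 be an integer, and suppose that f̂(k) = 0 for every k ∈ ℤ^d that does not lie in Y = ℤ^d_+ ∪ ℤ^d_− (that is, unless either k_j ≥ 0 for all j, or k_j < 0 for all j). If D_{r−1}(h) := (∑_{|k|₁≥r−1} (|k|₁!/(|k|₁−r+1)!)^p |f̂(k)|^p · |1 − e^{i h σ(k)}|^p)^{1/p}, with σ(k) = k_1 + ⋯ + k_d, satisfies D_{r−1}(h) = O(ω(|h|)) as h → 0, then E_A(ρ) := (∑_{|k|₁≥r} (∑_{j=r}^{|k|₁} C(|k|₁,j)(1−ρ)^j ρ^{|k|₁−j})^p |f̂(k)|^p)^{1/p} satisfies E_A(ρ) = O((1−ρ)^{r−1}·ω(1−ρ)) as ρ→1⁻. -/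
/-!
Put `x = 1 - ρ`. The error multiplier of a frequency `k` with `|k|₁ = ν` is the binomial tail
`P(B(ν, x) ≥ r)`, and on `Y` the diagonal phase gives `|1 - e^{ihσ(k)}| = |2 sin (hν/2)|`.
Split the frequencies at `n ≈ 1/x`. For `ν ≤ n` the tail is at most
`C(ν, r) x^r ≤ x^{r-1} (ν!/(ν-r+1)!) (xν) / r!` and `xν ≤ π sin (xν/2)`, so this part is
`O(x^{r-1} D_{r-1}(x))`. For `ν > n` the tail is at most `1 ≤ (xν)^{r-1}`, and averaging
`D_{r-1}(1/μ)^p` over `μ > n` with weights `1/μ` recovers every such coefficient with weight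
bounded below; condition (B) bounds that average by `C^p ω(x)^{p-1} C₀ ω(1/n)`.
-/

open scoped Real ENNReal
open MeasureTheory

open Finset Real
open scoped Nat

/-- `P(B(ν, x) ≥ r)`; the error of the Abel–Poisson–Taylor sum of order `r` multiplies a
frequency of degree `ν` by `binomialTail ν r (1 - ρ)`. -/
noncomputable def binomialTail (ν r : ℕ) (x : ℝ) : ℝ :=
  ∑ j ∈ Icc r ν, (ν.choose j : ℝ) * x ^ j * (1 - x) ^ (ν - j)

section binomialTail

variable {ν r : ℕ} {x : ℝ}

lemma binomialTail_eq_zero_of_lt (h : ν < r) : binomialTail ν r x = 0 := by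
  rw [binomialTail, Icc_eq_empty (by omega), sum_empty]

lemma binomialTail_nonneg (hx0 : 0 ≤ x) (hx1 : x ≤ 1) : 0 ≤ binomialTail ν r x :=
  sum_nonneg fun j _ => by have := sub_nonneg.2 hx1; positivity

lemma binomialTail_le_one (hx0 : 0 ≤ x) (hx1 : x ≤ 1) : binomialTail ν r x ≤ 1 := by
  have := sub_nonneg.2 hx1
  calc binomialTail ν r x
      ≤ ∑ j ∈ range (ν + 1), (ν.choose j : ℝ) * x ^ j * (1 - x) ^ (ν - j) :=
        sum_le_sum_of_subset_of_nonneg (fun j hj => by simp at hj ⊢; omega)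
          (fun j _ _ => by positivity)
    _ = (x + (1 - x)) ^ ν := by rw [add_pow]; exact sum_congr rfl fun j _ => by ring
    _ = 1 := by simp

lemma binomialTail_le_choose_mul_pow (hx0 : 0 ≤ x) (hx1 : x ≤ 1) :
    binomialTail ν r x ≤ ν.choose r * x ^ r := by
  rcases lt_or_ge ν r with hνr | hrν
  · rw [binomialTail_eq_zero_of_lt hνr]; positivity
  have := sub_nonneg.2 hx1
  calc binomialTail ν r x
      ≤ ∑ j ∈ Icc r ν, ((ν.choose j * j.choose r : ℕ) : ℝ) * x ^ j * (1 - x) ^ (ν - j) := by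
        refine sum_le_sum fun j hj => ?_
        have : 1 ≤ j.choose r := Nat.choose_pos (mem_Icc.1 hj).1
        gcongr
        exact_mod_cast Nat.le_mul_of_pos_right _ this
    _ = ν.choose r * x ^ r *
          ∑ i ∈ range (ν - r + 1), x ^ i * (1 - x) ^ (ν - r - i) * (ν - r).choose i := by
        rw [← Ico_add_one_right_eq_Icc, sum_Ico_eq_sum_range, mul_sum, Nat.sub_add_comm hrν]
        refine sum_congr rfl fun i _ => ?_
        rw [Nat.choose_mul (by omega), Nat.add_sub_cancel_left, pow_add,
          show ν - (r + i) = ν - r - i by omega]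
        push_cast; ring
    _ = ν.choose r * x ^ r := by rw [← add_pow]; simp

end binomialTail

lemma Nat.choose_succ_mul_factorial_le (ν m : ℕ) :
    ν.choose (m + 1) * (m + 1)! ≤ ν * ν.descFactorial m := by
  rw [mul_comm, ← Nat.descFactorial_eq_factorial_mul_choose, Nat.descFactorial_succ]
  exact Nat.mul_le_mul_right _ (Nat.sub_le _ _)

lemma Nat.pow_le_succ_pow_mul_descFactorial {ν m : ℕ} (h : m < ν) :
    ν ^ m ≤ (m + 1) ^ m * ν.descFactorial m := by
  have hν : ν ≤ (m + 1) * (ν + 1 - m) := by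
    obtain ⟨a, rfl⟩ := Nat.exists_eq_add_of_lt h
    rw [show m + a + 1 + 1 - m = a + 2 by omega]
    nlinarith
  calc ν ^ m ≤ ((m + 1) * (ν + 1 - m)) ^ m := Nat.pow_le_pow_left hν m
    _ = (m + 1) ^ m * (ν + 1 - m) ^ m := mul_pow _ _ _
    _ ≤ (m + 1) ^ m * ν.descFactorial m :=
      Nat.mul_le_mul_left _ (Nat.pow_sub_le_descFactorial ν m)

lemma le_pi_mul_sin_half {θ : ℝ} (h0 : 0 ≤ θ) (hθ : θ ≤ π) : θ ≤ π * sin (θ / 2) := by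
  have hsin := mul_le_sin (x := θ / 2) (by linarith) (by linarith)
  calc θ = π * (2 / π * (θ / 2)) := by field_simp
    _ ≤ π * sin (θ / 2) := by gcongr

lemma rpow_le_rpow_sub_one_mul {a b p : ℝ} (ha : 0 < a) (hab : a ≤ b) (hp : 1 ≤ p) :
    a ^ p ≤ b ^ (p - 1) * a := by
  calc a ^ p = a ^ (p - 1) * a := by rw [Real.rpow_sub_one ha.ne', div_mul_cancel₀ _ ha.ne']
    _ ≤ b ^ (p - 1) * a := by gcongr

lemma binomialTail_succ_le_of_mul_le_pi {ν m : ℕ} {x : ℝ} (hx0 : 0 ≤ x) (hx1 : x ≤ 1)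
    (hνx : x * ν ≤ π) :
    binomialTail ν (m + 1) x ≤
      x ^ m * (π / (2 * (m + 1)!)) * (ν.descFactorial m * |2 * sin (x * ν / 2)|) := by
  have hcomb : (ν.choose (m + 1) : ℝ) * (m + 1)! ≤ ν * ν.descFactorial m := by
    exact_mod_cast Nat.choose_succ_mul_factorial_le ν m
  have hsin : x * ν ≤ π / 2 * |2 * sin (x * ν / 2)| := by
    have := le_pi_mul_sin_half (by positivity) hνx
    rw [abs_mul, abs_two]
    nlinarith [le_abs_self (sin (x * ν / 2)), pi_pos]
  calc binomialTail ν (m + 1) x ≤ ν.choose (m + 1) * x ^ (m + 1) :=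
        binomialTail_le_choose_mul_pow hx0 hx1
    _ = (ν.choose (m + 1) * (m + 1)!) * (x ^ m * x) / (m + 1)! := by
        field_simp; ring
    _ ≤ (ν * ν.descFactorial m) * (x ^ m * x) / (m + 1)! := by gcongr
    _ = x ^ m * ν.descFactorial m * (x * ν) / (m + 1)! := by ring
    _ ≤ x ^ m * ν.descFactorial m * (π / 2 * |2 * sin (x * ν / 2)|) / (m + 1)! := by gcongr
    _ = _ := by ring

lemma binomialTail_succ_le_of_one_le_mul {ν m : ℕ} {x : ℝ} (hx0 : 0 ≤ x) (hx1 : x ≤ 1)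
    (hνx : 1 ≤ ν * x) :
    binomialTail ν (m + 1) x ≤ x ^ m * (m + 1) ^ m * ν.descFactorial m := by
  rcases le_or_gt ν m with hνm | hmν
  · rw [binomialTail_eq_zero_of_lt (by omega)]; positivity
  have key : (ν : ℝ) ^ m ≤ (m + 1) ^ m * ν.descFactorial m := by
    exact_mod_cast Nat.pow_le_succ_pow_mul_descFactorial hmν
  calc binomialTail ν (m + 1) x ≤ 1 := binomialTail_le_one hx0 hx1
    _ ≤ (ν * x) ^ m := one_le_pow₀ hνx
    _ = x ^ m * ν ^ m := by ring
    _ ≤ x ^ m * ((m + 1) ^ m * ν.descFactorial m) := by gcongr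
    _ = _ := by ring

namespace ENNReal

lemma ofReal_mul_rpow {a b p : ℝ} (ha : 0 ≤ a) (hb : 0 ≤ b) :
    ENNReal.ofReal ((a * b) ^ p) = ENNReal.ofReal (a ^ p) * ENNReal.ofReal (b ^ p) := by
  rw [Real.mul_rpow ha hb, ENNReal.ofReal_mul (Real.rpow_nonneg ha p)]

lemma ofReal_rpow_le_mul_of_le {a b k p : ℝ} (ha : 0 ≤ a) (hk : 0 ≤ k) (hb : 0 ≤ b)
    (hp : 0 ≤ p) (h : a ≤ k * b) :
    ENNReal.ofReal (a ^ p) ≤ ENNReal.ofReal (k ^ p) * ENNReal.ofReal (b ^ p) := by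
  rw [← ofReal_mul_rpow hk hb]
  exact ENNReal.ofReal_le_ofReal (Real.rpow_le_rpow ha h hp)

lemma le_ofReal_rpow_of_rpow_one_div_le {S : ℝ≥0∞} {a p : ℝ} (ha : 0 ≤ a) (hp : 0 < p)
    (h : S ^ (1 / p) ≤ ENNReal.ofReal a) : S ≤ ENNReal.ofReal (a ^ p) := by
  rw [← ENNReal.ofReal_rpow_of_nonneg ha hp.le, ← ENNReal.rpow_inv_rpow hp.ne' S, ← one_div]
  gcongr

lemma rpow_one_div_le_ofReal_add {S : ℝ≥0∞} {a b p : ℝ} (ha : 0 ≤ a) (hb : 0 ≤ b) (hp : 1 ≤ p)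
    (h : S ≤ ENNReal.ofReal (a ^ p) + ENNReal.ofReal (b ^ p)) :
    S ^ (1 / p) ≤ ENNReal.ofReal (a + b) := by
  have hp0 : 0 < p := by linarith
  have hroot : ∀ {t : ℝ}, 0 ≤ t → ENNReal.ofReal (t ^ p) ^ (1 / p) = ENNReal.ofReal t :=
    fun ht => by
      rw [← ENNReal.ofReal_rpow_of_nonneg ht hp0.le, one_div, ENNReal.rpow_rpow_inv hp0.ne']
  calc S ^ (1 / p) ≤ (ENNReal.ofReal (a ^ p) + ENNReal.ofReal (b ^ p)) ^ (1 / p) := by gcongr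
    _ ≤ ENNReal.ofReal (a ^ p) ^ (1 / p) + ENNReal.ofReal (b ^ p) ^ (1 / p) :=
      ENNReal.rpow_add_le_add_rpow _ _ (by positivity) (by rw [div_le_one hp0]; exact hp)
    _ = ENNReal.ofReal (a + b) := by rw [hroot ha, hroot hb, ENNReal.ofReal_add ha hb]

end ENNReal

open ENNReal

lemma ofReal_rpow_binomialTail_mul_le {ν m n : ℕ} {c x p : ℝ} (hc : 0 ≤ c) (hp : 0 ≤ p)
    (hx0 : 0 ≤ x) (hx1 : x ≤ 1) (hnx1 : 1 ≤ n * x) (hnx2 : n * x ≤ π) :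
    ENNReal.ofReal ((binomialTail ν (m + 1) x * c) ^ p) ≤
      ENNReal.ofReal ((x ^ m * (π / (2 * (m + 1)!))) ^ p) *
          ENNReal.ofReal ((ν.descFactorial m * c * |2 * sin (x * ν / 2)|) ^ p) +
        ENNReal.ofReal ((x ^ m * (m + 1) ^ m) ^ p) *
          (if n < ν then ENNReal.ofReal ((ν.descFactorial m * c) ^ p) else 0) := by
  have ht : 0 ≤ binomialTail ν (m + 1) x := binomialTail_nonneg hx0 hx1
  split_ifs with hnν
  · refine le_add_left (ofReal_rpow_le_mul_of_le (by positivity) (by positivity)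
      (by positivity) hp ?_)
    have hνx : 1 ≤ ν * x := hnx1.trans (by gcongr)
    calc binomialTail ν (m + 1) x * c ≤ x ^ m * (m + 1) ^ m * ν.descFactorial m * c := by
          gcongr; exact binomialTail_succ_le_of_one_le_mul hx0 hx1 hνx
      _ = _ := by ring
  · rw [mul_zero, add_zero]
    refine ofReal_rpow_le_mul_of_le (by positivity) (by positivity) (by positivity) hp ?_
    have hνx : x * ν ≤ π := by
      rw [mul_comm]; exact le_trans (by gcongr; exact_mod_cast not_lt.1 hnν) hnx2
    calc binomialTail ν (m + 1) x * c
        ≤ x ^ m * (π / (2 * (m + 1)!)) * (ν.descFactorial m * |2 * sin (x * ν / 2)|) * c := by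
          gcongr; exact binomialTail_succ_le_of_mul_le_pi hx0 hx1 hνx
      _ = _ := by ring

/-- The scales `μ = n + 1 + v ∈ [ν, 2ν)` already suffice: on them `π * |2 sin (ν / 2μ)| ≥ 1`. -/
lemma one_le_tsum_ofReal_mul_sin_rpow {n ν : ℕ} (hnν : n < ν) {p : ℝ} (hp : 0 ≤ p) :
    1 ≤ ∑' v : ℕ, ENNReal.ofReal (2 * π ^ p / ((n : ℝ) + 1 + v)) *
      ENNReal.ofReal (|2 * sin (1 / ((n : ℝ) + 1 + v) * ν / 2)| ^ p) := by
  have hν : (0 : ℝ) < ν := by exact_mod_cast (Nat.zero_le n).trans_lt hnν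
  have hterm : ∀ v ∈ Ico (ν - n - 1) (2 * ν - n - 1),
      ENNReal.ofReal (1 / ν) ≤ ENNReal.ofReal (2 * π ^ p / ((n : ℝ) + 1 + v)) *
        ENNReal.ofReal (|2 * sin (1 / ((n : ℝ) + 1 + v) * ν / 2)| ^ p) := by
    intro v hv
    obtain ⟨hv1, hv2⟩ := mem_Ico.1 hv
    have hμ1 : (ν : ℝ) ≤ (n : ℝ) + 1 + v := by exact_mod_cast (by omega : ν ≤ n + 1 + v)
    have hμ2 : (n : ℝ) + 1 + v ≤ 2 * ν := by exact_mod_cast (by omega : n + 1 + v ≤ 2 * ν)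
    set μ : ℝ := (n : ℝ) + 1 + v
    have hμ : 0 < μ := hν.trans_le hμ1
    have hθ1 : 1 / 2 ≤ 1 / μ * ν := by rw [div_mul_eq_mul_div, le_div_iff₀ hμ]; linarith
    have hθ2 : 1 / μ * ν ≤ 1 := by rw [div_mul_eq_mul_div, div_le_one hμ]; linarith
    have hsin : 1 ≤ π * |2 * sin (1 / μ * ν / 2)| := by
      have := le_pi_mul_sin_half (by linarith) (hθ2.trans (by linarith [pi_gt_three]))
      have := mul_le_mul_of_nonneg_left (le_abs_self (sin (1 / μ * ν / 2))) pi_pos.le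
      rw [abs_mul, abs_two]
      linarith
    rw [← ENNReal.ofReal_mul (by positivity)]
    refine ENNReal.ofReal_le_ofReal ?_
    calc 1 / (ν : ℝ) ≤ 2 / μ := by rw [div_le_div_iff₀ hν hμ]; linarith
      _ ≤ 2 / μ * (π * |2 * sin (1 / μ * ν / 2)|) ^ p := by
        have := Real.one_le_rpow hsin hp
        have : 0 < 2 / μ := by positivity
        nlinarith
      _ = 2 * π ^ p / μ * |2 * sin (1 / μ * ν / 2)| ^ p := by
        rw [Real.mul_rpow pi_pos.le (abs_nonneg _)]; ring
  calc (1 : ℝ≥0∞) = ∑ _v ∈ Ico (ν - n - 1) (2 * ν - n - 1), ENNReal.ofReal (1 / ν) := by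
        rw [sum_const, Nat.card_Ico, nsmul_eq_mul, ← ENNReal.ofReal_natCast,
          ← ENNReal.ofReal_mul (by positivity), show 2 * ν - n - 1 - (ν - n - 1) = ν by omega]
        rw [mul_one_div_cancel hν.ne', ENNReal.ofReal_one]
    _ ≤ _ := sum_le_sum hterm
    _ ≤ _ := ENNReal.sum_le_tsum _

lemma tsum_ite_lt_ofReal_rpow_le {ι : Type*} (ν : ι → ℕ) {a : ι → ℝ} (ha : ∀ i, 0 ≤ a i)
    {p : ℝ} (hp : 1 ≤ p) {ω : ℝ → ℝ} (hωm : MonotoneOn ω (Set.Icc 0 1))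
    (hωpos : ∀ t ∈ Set.Ioc (0 : ℝ) 1, 0 < ω t) {C C₀ x : ℝ} (hC : 0 ≤ C) (hC₀ : 0 ≤ C₀)
    {n : ℕ} (hx1 : x ≤ 1) (hnx : 1 ≤ n * x)
    (hB : ∑' v : ℕ, ENNReal.ofReal (ω (1 / ((n : ℝ) + 1 + v)) / ((n : ℝ) + 1 + v))
      ≤ ENNReal.ofReal (C₀ * ω (1 / (n : ℝ))))
    (hD : ∀ h, 0 < h → h ≤ x →
      ∑' i, ENNReal.ofReal ((a i * |2 * sin (h * ν i / 2)|) ^ p) ≤ ENNReal.ofReal ((C * ω h) ^ p)) :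
    ∑' i, (if n < ν i then ENNReal.ofReal (a i ^ p) else 0) ≤
      ENNReal.ofReal (2 * π ^ p * C ^ p * C₀ * ω x ^ p) := by
  have hp0 : 0 ≤ p := by linarith
  have hn : (0 : ℝ) < n := by
    rcases Nat.eq_zero_or_pos n with rfl | hn
    · simp at hnx; linarith
    · exact_mod_cast hn
  have hx0 : 0 < x := by nlinarith
  have hnx' : 1 / (n : ℝ) ≤ x := by rw [div_le_iff₀ hn]; linarith
  have hωx : 0 < ω x := hωpos x ⟨hx0, hx1⟩
  have hK : 0 ≤ 2 * π ^ p * C ^ p * ω x ^ (p - 1) := by positivity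
  have hscale : ∀ v : ℕ, 0 < 1 / ((n : ℝ) + 1 + v) ∧ 1 / ((n : ℝ) + 1 + v) ≤ x := fun v =>
    ⟨by positivity, le_trans (one_div_le_one_div_of_le hn (by linarith [v.cast_nonneg (α := ℝ)]))
      hnx'⟩
  calc ∑' i, (if n < ν i then ENNReal.ofReal (a i ^ p) else 0)
      ≤ ∑' i, ∑' v : ℕ, ENNReal.ofReal (2 * π ^ p / ((n : ℝ) + 1 + v)) *
          ENNReal.ofReal ((a i * |2 * sin (1 / ((n : ℝ) + 1 + v) * ν i / 2)|) ^ p) := by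
        refine ENNReal.tsum_le_tsum fun i => ?_
        split_ifs with hi
        · calc ENNReal.ofReal (a i ^ p) = ENNReal.ofReal (a i ^ p) * 1 := (mul_one _).symm
            _ ≤ ENNReal.ofReal (a i ^ p) * ∑' v : ℕ,
                  ENNReal.ofReal (2 * π ^ p / ((n : ℝ) + 1 + v)) *
                    ENNReal.ofReal (|2 * sin (1 / ((n : ℝ) + 1 + v) * ν i / 2)| ^ p) := by
                gcongr; exact one_le_tsum_ofReal_mul_sin_rpow hi hp0
            _ = _ := by
                rw [← ENNReal.tsum_mul_left]
                refine tsum_congr fun v => ?_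
                rw [ofReal_mul_rpow (ha i) (abs_nonneg _)]; ring
        · exact bot_le
    _ = ∑' v : ℕ, ENNReal.ofReal (2 * π ^ p / ((n : ℝ) + 1 + v)) *
          ∑' i, ENNReal.ofReal ((a i * |2 * sin (1 / ((n : ℝ) + 1 + v) * ν i / 2)|) ^ p) := by
        rw [ENNReal.tsum_comm]; simp_rw [ENNReal.tsum_mul_left]
    _ ≤ ∑' v : ℕ, ENNReal.ofReal (2 * π ^ p / ((n : ℝ) + 1 + v)) *
          ENNReal.ofReal ((C * ω (1 / ((n : ℝ) + 1 + v))) ^ p) := by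
        gcongr with v; exact hD _ (hscale v).1 (hscale v).2
    _ ≤ ∑' v : ℕ, ENNReal.ofReal (2 * π ^ p * C ^ p * ω x ^ (p - 1)) *
          ENNReal.ofReal (ω (1 / ((n : ℝ) + 1 + v)) / ((n : ℝ) + 1 + v)) := by
        refine ENNReal.tsum_le_tsum fun v => ?_
        obtain ⟨hh0, hhx⟩ := hscale v
        have hωh : 0 < ω (1 / ((n : ℝ) + 1 + v)) := hωpos _ ⟨hh0, hhx.trans hx1⟩
        have hμ : (0 : ℝ) < (n : ℝ) + 1 + v := by positivity
        rw [← ENNReal.ofReal_mul (by positivity), ← ENNReal.ofReal_mul hK]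
        refine ENNReal.ofReal_le_ofReal ?_
        have hmono := rpow_le_rpow_sub_one_mul hωh (hωm ⟨hh0.le, hhx.trans hx1⟩
          ⟨hx0.le, hx1⟩ hhx) hp
        rw [Real.mul_rpow hC hωh.le]
        calc 2 * π ^ p / ((n : ℝ) + 1 + v) * (C ^ p * ω (1 / ((n : ℝ) + 1 + v)) ^ p)
            ≤ 2 * π ^ p / ((n : ℝ) + 1 + v) *
                (C ^ p * (ω x ^ (p - 1) * ω (1 / ((n : ℝ) + 1 + v)))) := by gcongr
          _ = _ := by ring
    _ = ENNReal.ofReal (2 * π ^ p * C ^ p * ω x ^ (p - 1)) *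
          ∑' v : ℕ, ENNReal.ofReal (ω (1 / ((n : ℝ) + 1 + v)) / ((n : ℝ) + 1 + v)) :=
        ENNReal.tsum_mul_left
    _ ≤ ENNReal.ofReal (2 * π ^ p * C ^ p * ω x ^ (p - 1)) * ENNReal.ofReal (C₀ * ω x) := by
        gcongr
        refine hB.trans (ENNReal.ofReal_le_ofReal ?_)
        gcongr
        exact hωm ⟨by positivity, hnx'.trans hx1⟩ ⟨hx0.le, hx1⟩ hnx'
    _ = ENNReal.ofReal (2 * π ^ p * C ^ p * C₀ * ω x ^ p) := by
        rw [← ENNReal.ofReal_mul hK, Real.rpow_sub_one hωx.ne']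
        congr 1
        field_simp

lemma exists_nat_one_le_mul_le_two {x : ℝ} (hx0 : 0 < x) (hx1 : x ≤ 1) {N : ℕ}
    (hN : N * x ≤ 1) : ∃ n : ℕ, N ≤ n ∧ 1 ≤ n * x ∧ n * x ≤ 2 := by
  have hlow : x⁻¹ ≤ ⌈x⁻¹⌉₊ := Nat.le_ceil _
  have hupp : (⌈x⁻¹⌉₊ : ℝ) < x⁻¹ + 1 := Nat.ceil_lt_add_one (inv_nonneg.2 hx0.le)
  have hinv : x⁻¹ * x = 1 := inv_mul_cancel₀ hx0.ne'
  refine ⟨⌈x⁻¹⌉₊, ?_, ?_, ?_⟩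
  · have : (N : ℝ) ≤ x⁻¹ := by rw [← one_div, le_div_iff₀ hx0]; exact hN
    exact_mod_cast this.trans hlow
  · nlinarith
  · nlinarith

theorem tsum_binomialTail_rpow_le {ι : Type*} (ν : ι → ℕ) {c : ι → ℝ} (hc : ∀ i, 0 ≤ c i)
    (m : ℕ) {p : ℝ} (hp : 1 ≤ p) {ω : ℝ → ℝ} (hωm : MonotoneOn ω (Set.Icc 0 1))
    (hωpos : ∀ t ∈ Set.Ioc (0 : ℝ) 1, 0 < ω t) {C₀ : ℝ} (hC₀ : 0 ≤ C₀) {N₀ : ℕ}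
    (hB : ∀ n : ℕ, N₀ ≤ n →
      ∑' v : ℕ, ENNReal.ofReal (ω (1 / ((n : ℝ) + 1 + v)) / ((n : ℝ) + 1 + v))
        ≤ ENNReal.ofReal (C₀ * ω (1 / (n : ℝ))))
    {C x : ℝ} (hC : 0 ≤ C) (hx0 : 0 < x) (hx1 : x ≤ 1) (hxN : N₀ * x ≤ 1)
    (hD : ∀ h, 0 < h → h ≤ x →
      ∑' i, ENNReal.ofReal (((ν i).descFactorial m * c i * |2 * sin (h * ν i / 2)|) ^ p)
        ≤ ENNReal.ofReal ((C * ω h) ^ p)) :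
    (∑' i, ENNReal.ofReal ((binomialTail (ν i) (m + 1) x * c i) ^ p)) ^ (1 / p) ≤
      ENNReal.ofReal
        (C * (π / (2 * (m + 1)!) + (m + 1) ^ m * π * (2 * C₀) ^ (1 / p)) * x ^ m * ω x) := by
  have hp0 : 0 < p := by linarith
  obtain ⟨n, hnN, hnx1, hnx2⟩ := exists_nat_one_le_mul_le_two hx0 hx1 hxN
  have hωx : 0 < ω x := hωpos x ⟨hx0, hx1⟩
  have hsplit := fun i => ofReal_rpow_binomialTail_mul_le (ν := ν i) (m := m) (hc i) hp0.le
    hx0.le hx1 hnx1 (hnx2.trans two_le_pi)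
  have htail := tsum_ite_lt_ofReal_rpow_le ν (a := fun i => (ν i).descFactorial m * c i)
    (fun i => mul_nonneg (Nat.cast_nonneg _) (hc i)) hp hωm hωpos hC hC₀ hx1 hnx1 (hB n hnN)
    (by simpa only [mul_assoc] using hD)
  have hroot : (π * (2 * C₀) ^ (1 / p) * (C * ω x)) ^ p = 2 * π ^ p * C ^ p * C₀ * ω x ^ p := by
    rw [Real.mul_rpow (by positivity) (by positivity), Real.mul_rpow pi_pos.le (by positivity),
      Real.mul_rpow hC hωx.le, one_div, Real.rpow_inv_rpow (by positivity) hp0.ne']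
    ring
  calc (∑' i, ENNReal.ofReal ((binomialTail (ν i) (m + 1) x * c i) ^ p)) ^ (1 / p)
      ≤ ENNReal.ofReal (x ^ m * (π / (2 * (m + 1)!)) * (C * ω x) +
          x ^ m * (m + 1) ^ m * (π * (2 * C₀) ^ (1 / p) * (C * ω x))) := by
        refine rpow_one_div_le_ofReal_add (by positivity) (by positivity) hp ?_
        rw [ofReal_mul_rpow (a := x ^ m * (π / (2 * (m + 1)!))) (by positivity) (by positivity),
          ofReal_mul_rpow (a := x ^ m * (m + 1) ^ m) (by positivity) (by positivity), hroot]
        calc _ ≤ _ := ENNReal.tsum_le_tsum hsplit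
          _ = _ := by rw [ENNReal.tsum_add, ENNReal.tsum_mul_left, ENNReal.tsum_mul_left]
          _ ≤ _ := by gcongr; exact hD x hx0 le_rfl
    _ = _ := by congr 1; ring

lemma diagSum_eq_or_eq_neg_norm1 {d : ℕ} {k : Fin d → ℤ}
    (hk : (∀ j, 0 ≤ k j) ∨ (∀ j, k j < 0)) :
    diagSum k = norm1 k ∨ diagSum k = -(norm1 k : ℤ) := by
  unfold diagSum norm1
  push_cast
  rcases hk with hk | hk
  · exact Or.inl (sum_congr rfl fun j _ => (abs_of_nonneg (hk j)).symm)
  · refine Or.inr ?_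
    rw [← sum_neg_distrib]
    exact sum_congr rfl fun j _ => by rw [abs_of_neg (hk j), neg_neg]

lemma norm_one_sub_exp_diagSum {d : ℕ} {k : Fin d → ℤ}
    (hk : (∀ j, 0 ≤ k j) ∨ (∀ j, k j < 0)) (h : ℝ) :
    ‖1 - Complex.exp (Complex.I * h * diagSum k)‖ = |2 * sin (h * norm1 k / 2)| := by
  have harg : Complex.I * h * (diagSum k : ℂ) = Complex.I * ((h * (diagSum k : ℝ) : ℝ) : ℂ) := by
    push_cast; ring
  rw [norm_sub_rev, harg, Complex.norm_exp_I_mul_ofReal_sub_one, Real.norm_eq_abs]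
  rcases diagSum_eq_or_eq_neg_norm1 hk with hσ | hσ <;> rw [hσ] <;> push_cast
  · rfl
  · rw [mul_neg, neg_div, sin_neg, mul_neg, abs_neg]

lemma ite_ofReal_rpow_norm_one_sub_exp_eq {d m : ℕ} {c : (Fin d → ℤ) → ℂ} {p : ℝ} (hp : 0 < p)
    (hY : ∀ k : Fin d → ℤ, ¬ ((∀ j, 0 ≤ k j) ∨ (∀ j, k j < 0)) → c k = 0)
    (k : Fin d → ℤ) (h : ℝ) :
    (if m ≤ norm1 k then
        ENNReal.ofReal (((norm1 k).descFactorial m * ‖c k‖ *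
          ‖1 - Complex.exp (Complex.I * h * diagSum k)‖) ^ p) else 0) =
      ENNReal.ofReal (((norm1 k).descFactorial m * ‖c k‖ * |2 * sin (h * norm1 k / 2)|) ^ p) := by
  by_cases hc : c k = 0
  · simp [hc, Real.zero_rpow hp.ne']
  rw [norm_one_sub_exp_diagSum (not_not.1 (mt (hY k) hc))]
  split_ifs with hm
  · rfl
  · rw [Nat.descFactorial_eq_zero_iff_lt.2 (by omega)]
    simp [Real.zero_rpow hp.ne']

lemma ite_ofReal_rpow_sum_choose_eq {ν r : ℕ} {c ρ p : ℝ} (hp : 0 < p) :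
    (if r ≤ ν then
        ENNReal.ofReal (((∑ j ∈ Icc r ν, (ν.choose j : ℝ) * (1 - ρ) ^ j * ρ ^ (ν - j)) * c) ^ p)
        else 0) =
      ENNReal.ofReal ((binomialTail ν r (1 - ρ) * c) ^ p) := by
  split_ifs with h
  · simp [binomialTail]
  · rw [binomialTail_eq_zero_of_lt (by omega)]
    simp [Real.zero_rpow hp.ne']

theorem stmt_7_general
    {d : ℕ} {p : ℝ} (hp : 1 ≤ p)
    (f : (Fin d → ℝ) → ℂ)
    (ω : ℝ → ℝ)
    (hωm : MonotoneOn ω (Set.Icc 0 1))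
    (hωpos : ∀ t ∈ Set.Ioc (0:ℝ) 1, 0 < ω t)
    (hB : ∃ C₀ > (0:ℝ), ∃ N₀ : ℕ, 1 ≤ N₀ ∧ ∀ n : ℕ, N₀ ≤ n →
      (∑' v : ℕ, ENNReal.ofReal (ω (1 / ((n : ℝ) + 1 + (v : ℝ))) / ((n : ℝ) + 1 + (v : ℝ))))
        ≤ ENNReal.ofReal (C₀ * ω (1 / (n : ℝ))))
    (r : ℕ) (hr : 1 ≤ r)
    (hY : ∀ k : Fin d → ℤ, ¬ ((∀ j, 0 ≤ k j) ∨ (∀ j, k j < 0)) → fCoeff f k = 0)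
    (hD :
      ∃ C > (0:ℝ), ∃ δ > (0:ℝ), ∀ h : ℝ, 0 < |h| → |h| < δ →
      (∑' k : Fin d → ℤ, if r - 1 ≤ norm1 k then
          ENNReal.ofReal (((Nat.descFactorial (norm1 k) (r - 1) : ℝ) * ‖fCoeff f k‖ * ‖1 - Complex.exp (Complex.I * (h : ℂ) * (diagSum k : ℂ))‖) ^ p)
          else 0) ^ (1/p)
        ≤ ENNReal.ofReal (C * ω |h|))
    :
    ∃ C > (0:ℝ), ∃ δ : ℝ, 0 < δ ∧ δ < 1 ∧ ∀ ρ : ℝ, 1 - δ < ρ → ρ < 1 →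
      (∑' k : Fin d → ℤ, if r ≤ norm1 k then
          ENNReal.ofReal (((∑ j ∈ Finset.Icc r (norm1 k),
            (Nat.choose (norm1 k) j : ℝ) * (1 - ρ) ^ j * ρ ^ (norm1 k - j)) * ‖fCoeff f k‖) ^ p)
          else 0) ^ (1/p)
        ≤ ENNReal.ofReal (C * (1 - ρ) ^ (r - 1) * ω (1 - ρ)) := by
  obtain ⟨m, rfl⟩ : ∃ m, r = m + 1 := ⟨r - 1, by omega⟩
  obtain ⟨C₀, hC₀, N₀, -, hB⟩ := hB
  obtain ⟨C, hC, δ, hδ, hD⟩ := hD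
  have hp0 : 0 < p := by linarith
  have hN : (0 : ℝ) < N₀ + 2 := by positivity
  refine ⟨C * (π / (2 * (m + 1)!) + (m + 1) ^ m * π * (2 * C₀) ^ (1 / p)), by positivity,
    min δ (1 / (N₀ + 2)), lt_min hδ (by positivity),
    (min_le_right _ _).trans_lt (by rw [div_lt_one hN]; linarith), fun ρ hρ hρ1 => ?_⟩
  have hxδ : 1 - ρ < δ := by linarith [min_le_left δ (1 / (N₀ + 2))]
  have hxN : (1 - ρ) * (N₀ + 2) < 1 := by
    rw [← lt_div_iff₀ hN]; linarith [min_le_right δ (1 / (N₀ + 2))]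
  simp only [add_tsub_cancel_right, ite_ofReal_rpow_sum_choose_eq hp0]
  refine tsum_binomialTail_rpow_le norm1 (fun k => norm_nonneg (fCoeff f k)) m hp hωm hωpos
    hC₀.le hB hC.le (by linarith) (by nlinarith) (by nlinarith) fun h h0 hh => ?_
  refine le_ofReal_rpow_of_rpow_one_div_le (mul_nonneg hC.le (hωpos h ⟨h0, by nlinarith⟩).le)
    hp0 ?_
  simpa only [abs_of_pos h0, add_tsub_cancel_right, ite_ofReal_rpow_norm_one_sub_exp_eq hp0 hY]
    using hD h (abs_pos.2 h0.ne') (by rw [abs_of_pos h0]; linarith)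

theorem stmt_7
    {d : ℕ} (hd : 1 ≤ d) {p : ℝ} (hp : 1 ≤ p)
    (f : (Fin d → ℝ) → ℂ)
    (hper : ∀ (x : Fin d → ℝ) (j : Fin d), f (Function.update x j (x j + 2 * Real.pi)) = f x)
    (hint : IntegrableOn f (Set.Icc (0 : Fin d → ℝ) (fun _ => 2 * Real.pi)))
    (ω : ℝ → ℝ)
    (hωc : ContinuousOn ω (Set.Icc 0 1)) (hωm : MonotoneOn ω (Set.Icc 0 1))
    (hω0 : ω 0 = 0) (hωpos : ∀ t ∈ Set.Ioc (0:ℝ) 1, 0 < ω t)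
    (hB : ∃ C₀ > (0:ℝ), ∃ N₀ : ℕ, 1 ≤ N₀ ∧ ∀ n : ℕ, N₀ ≤ n →
      (∑' v : ℕ, ENNReal.ofReal (ω (1 / ((n : ℝ) + 1 + (v : ℝ))) / ((n : ℝ) + 1 + (v : ℝ))))
        ≤ ENNReal.ofReal (C₀ * ω (1 / (n : ℝ))))
    (r : ℕ) (hr : 1 ≤ r)
    (hY : ∀ k : Fin d → ℤ, ¬ ((∀ j, 0 ≤ k j) ∨ (∀ j, k j < 0)) → fCoeff f k = 0)
    (hD :
      ∃ C > (0:ℝ), ∃ δ > (0:ℝ), ∀ h : ℝ, 0 < |h| → |h| < δ →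
      (∑' k : Fin d → ℤ, if r - 1 ≤ norm1 k then
          ENNReal.ofReal (((Nat.descFactorial (norm1 k) (r - 1) : ℝ) * ‖fCoeff f k‖ * ‖1 - Complex.exp (Complex.I * (h : ℂ) * (diagSum k : ℂ))‖) ^ p)
          else 0) ^ (1/p)
        ≤ ENNReal.ofReal (C * ω |h|))
    :
    ∃ C > (0:ℝ), ∃ δ : ℝ, 0 < δ ∧ δ < 1 ∧ ∀ ρ : ℝ, 1 - δ < ρ → ρ < 1 →
      (∑' k : Fin d → ℤ, if r ≤ norm1 k then
          ENNReal.ofReal (((∑ j ∈ Finset.Icc r (norm1 k),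
            (Nat.choose (norm1 k) j : ℝ) * (1 - ρ) ^ j * ρ ^ (norm1 k - j)) * ‖fCoeff f k‖) ^ p)
          else 0) ^ (1/p)
        ≤ ENNReal.ofReal (C * (1 - ρ) ^ (r - 1) * ω (1 - ρ)) :=
  stmt_7_general hp f ω hωm hωpos hB r hr hY hD
end

section
/- (Theorem 2, implication 3)⇒1) for f ∈ L_{1,Y}) Let s ≥ 1 be a real number, and suppose that f̂(k) = 0 for every k ∈ ℤ^d that does not lie in Y = ℤ^d_+ ∪ ℤ^d_− (that is, unless either k_j ≥ 0 for all j, or k_j < 0 for all j). If D^{(s−1)}(h) := (∑_{|k|₁≥1} |k|₁^{(s−1)p} |f̂(k)|^p · |1 − e^{i h σ(k)}|^p)^{1/p}, with σ(k) = k_1 + ⋯ + k_d, satisfies D^{(s−1)}(h) = O(ω(|h|)) as h → 0, then E_P(ρ) := (∑_{|k|₁≥1} (1 − ρ^{|k|₁^s})^p |f̂(k)|^p)^{1/p} satisfies E_P(ρ) = O(ω(1−ρ)) as ρ→1⁻. -/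
open scoped Real ENNReal
open MeasureTheory

/-!
On `Y` the diagonal sum `σ(k)` is `±|k|₁`, so the multiplier `|1 - e^{ihσ(k)}|` equals
`2 |sin (h |k|₁ / 2)|`, and Jordan's inequality bounds it below by `|k|₁ / M` when
`h = π / (2M)` and `|k|₁ ≤ 2M`. Split the frequencies into `|k|₁ ≤ N` and the dyadic blocks
`N 2^j < |k|₁ ≤ N 2^{j+1}`, with `N ≍ 1 / (1 - ρ)`. On the first part Bernoulli's inequality
`1 - ρ^a ≤ a (1 - ρ)` bounds the Abel–Poisson multiplier by `N (1 - ρ) |k|₁^{s-1} |k|₁ / N`;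
on the `j`-th block it is at most `1 ≤ |k|₁^{s-1} |k|₁ / (N 2^j)`. Hence the error is at most a
multiple of `∑_j D^{(s-1)}(π / (N 2^{j+1}))`, which is bounded by `∑_j ω (1 / (n 2^{j+1}))` for
`N = 4n`; by condensation this is at most `2 ∑_{v > n} ω(1/v)/v`, and condition (B) bounds
that by `ω (1/n) ≤ ω (1 - ρ)`.
-/

theorem ENNReal.rpow_sum_le_sum_rpow {ι : Type*} (f : ι → ℝ≥0∞) {r : ℝ} (hr0 : 0 < r)
    (hr1 : r ≤ 1) (s : Finset ι) : (∑ i ∈ s, f i) ^ r ≤ ∑ i ∈ s, f i ^ r := by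
  induction s using Finset.cons_induction with
  | empty => simp [ENNReal.zero_rpow_of_pos hr0]
  | cons a s ha ih =>
    rw [Finset.sum_cons, Finset.sum_cons]
    exact (ENNReal.rpow_add_le_add_rpow _ _ hr0.le hr1).trans (by gcongr)

theorem ENNReal.rpow_tsum_le_tsum_rpow {ι : Type*} (f : ι → ℝ≥0∞) {r : ℝ} (hr0 : 0 < r)
    (hr1 : r ≤ 1) : (∑' i, f i) ^ r ≤ ∑' i, f i ^ r := by
  have h : Filter.Tendsto (fun s : Finset ι => (∑ i ∈ s, f i) ^ r) Filter.atTop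
      (nhds ((∑' i, f i) ^ r)) :=
    (ENNReal.continuous_rpow_const.tendsto _).comp ENNReal.summable.hasSum
  exact le_of_tendsto h (Filter.Eventually.of_forall fun s =>
    (ENNReal.rpow_sum_le_sum_rpow f hr0 hr1 s).trans (ENNReal.sum_le_tsum s))

theorem ENNReal.rpow_tsum_le_ofReal_mul_rpow_tsum {ι : Type*} {F G : ι → ℝ≥0∞} {p c : ℝ}
    (hp : 0 < p) (hc : 0 ≤ c) (hFG : ∀ i, F i ≤ ENNReal.ofReal (c ^ p) * G i) :
    (∑' i, F i) ^ (1 / p) ≤ ENNReal.ofReal c * (∑' i, G i) ^ (1 / p) := by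
  have hc' : ENNReal.ofReal c = ENNReal.ofReal (c ^ p) ^ (1 / p) := by
    rw [← ENNReal.ofReal_rpow_of_nonneg hc hp.le, ← ENNReal.rpow_mul, mul_one_div_cancel hp.ne',
      ENNReal.rpow_one]
  rw [hc', ← ENNReal.mul_rpow_of_nonneg _ _ (by positivity), ← ENNReal.tsum_mul_left]
  gcongr with i
  exact hFG i

theorem Nat.exists_mul_two_pow_lt_le {N m : ℕ} (hN : 0 < N) (hm : N < m) :
    ∃ j, N * 2 ^ j < m ∧ m ≤ N * 2 ^ (j + 1) := by
  classical
  have hex : ∃ j, m ≤ N * 2 ^ (j + 1) :=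
    ⟨m, (Nat.lt_two_pow_self.trans (Nat.pow_lt_pow_succ one_lt_two)).le.trans
      (Nat.le_mul_of_pos_left _ hN)⟩
  refine ⟨Nat.find hex, ?_, Nat.find_spec hex⟩
  rcases h : Nat.find hex with _ | j
  · simpa using hm
  · simpa using Nat.find_min hex (h ▸ Nat.lt_succ_self j)

theorem ite_one_le_le_add_tsum_dyadic (y : ℝ≥0∞) {N : ℕ} (hN : 0 < N) (m : ℕ) :
    (if 1 ≤ m then y else 0) ≤ (if 1 ≤ m ∧ m ≤ N then y else 0) +
      ∑' j : ℕ, if N * 2 ^ j < m ∧ m ≤ N * 2 ^ (j + 1) then y else 0 := by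
  by_cases hm : 1 ≤ m
  · rw [if_pos hm]
    by_cases hmN : m ≤ N
    · rw [if_pos ⟨hm, hmN⟩]
      exact le_self_add
    · obtain ⟨j, hj⟩ := Nat.exists_mul_two_pow_lt_le hN (not_le.1 hmN)
      exact le_add_left ((if_pos hj).symm.le.trans (ENNReal.le_tsum j))
  · simp [hm]

theorem one_sub_rpow_le_mul_one_sub {ρ a : ℝ} (hρ : 0 ≤ ρ) (ha : 1 ≤ a) :
    1 - ρ ^ a ≤ a * (1 - ρ) := by
  have := one_add_mul_self_le_rpow_one_add (s := ρ - 1) (by linarith) ha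
  rw [add_sub_cancel] at this
  linarith

theorem one_sub_rpow_rpow_le_mul {ρ s m N c : ℝ} (hρ : 0 ≤ ρ) (hs : 1 ≤ s) (hm : 1 ≤ m)
    (hN : 0 < N) (hc : N * (1 - ρ) ≤ c) : 1 - ρ ^ (m ^ s) ≤ c * (m ^ (s - 1) * (m / N)) :=
  calc 1 - ρ ^ (m ^ s) ≤ m ^ s * (1 - ρ) :=
        one_sub_rpow_le_mul_one_sub hρ (Real.one_le_rpow hm (by linarith))
    _ = m ^ (s - 1) * (m / N) * (N * (1 - ρ)) := by
        rw [Real.rpow_sub_one (by positivity)]; field_simp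
    _ ≤ m ^ (s - 1) * (m / N) * c := by gcongr
    _ = _ := by ring

theorem one_sub_rpow_rpow_le_of_le {ρ s m M : ℝ} (hρ : 0 ≤ ρ) (hs : 1 ≤ s) (hm : 1 ≤ m)
    (hM : 0 < M) (hMm : M ≤ m) : 1 - ρ ^ (m ^ s) ≤ m ^ (s - 1) * (m / M) :=
  calc 1 - ρ ^ (m ^ s) ≤ 1 := sub_le_self _ (Real.rpow_nonneg hρ _)
    _ ≤ m ^ (s - 1) * (m / M) := one_le_mul_of_one_le_of_one_le
        (Real.one_le_rpow hm (by linarith)) ((one_le_div hM).2 hMm)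

theorem tsum_ofReal_le_two_mul_tsum_of_antitoneOn {g : ℝ → ℝ} (hg : AntitoneOn g (Set.Ici 1))
    (hg0 : ∀ x, 1 ≤ x → 0 ≤ g x) {n : ℕ} (hn : 0 < n) :
    ∑' j : ℕ, ENNReal.ofReal (g (n * 2 ^ (j + 1))) ≤
      2 * ∑' v : ℕ, ENNReal.ofReal (g (n + 1 + v) / (n + 1 + v)) := by
  set f : ℕ → ℝ≥0∞ := fun u => ENNReal.ofReal (g u / u)
  set u : ℕ → ℕ := fun j => n * 2 ^ j
  have hf : ∀ ⦃m m' : ℕ⦄, 1 < m → m ≤ m' → f m' ≤ f m := fun m m' hm hmm' => by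
    have hm1 : (1 : ℝ) ≤ m := by exact_mod_cast hm.le
    have hmm'R : (m : ℝ) ≤ m' := by exact_mod_cast hmm'
    exact ENNReal.ofReal_le_ofReal (div_le_div₀ (hg0 _ hm1) (hg hm1 (hm1.trans hmm'R) hmm'R)
      (by positivity) hmm'R)
  have hterm : ∀ j, ENNReal.ofReal (g (n * 2 ^ (j + 1))) =
      2 * ((u (j + 1) - u j) • f (u (j + 1))) := by
    intro j
    have h : u (j + 1) - u j = n * 2 ^ j := by simp only [u]; rw [pow_succ, ← mul_assoc]; omega
    rw [h, nsmul_eq_mul, ← ENNReal.ofReal_natCast, ← ENNReal.ofReal_ofNat,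
      ← ENNReal.ofReal_mul (by positivity), ← ENNReal.ofReal_mul (by positivity)]
    congr 1
    simp only [u]
    push_cast
    field_simp
    ring
  rw [ENNReal.tsum_eq_iSup_nat]
  refine iSup_le fun J => ?_
  calc ∑ j ∈ Finset.range J, ENNReal.ofReal (g (n * 2 ^ (j + 1)))
      = 2 * ∑ j ∈ Finset.range J, (u (j + 1) - u j) • f (u (j + 1)) := by
        rw [Finset.mul_sum]; exact Finset.sum_congr rfl fun j _ => hterm j
    _ ≤ 2 * ∑ k ∈ Finset.Ico (u 0 + 1) (u J + 1), f k := by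
        gcongr
        exact Finset.sum_schlomilch_le' hf (fun j => by positivity)
          (fun i j hij => Nat.mul_le_mul_left n (Nat.pow_le_pow_right two_pos hij)) J
    _ ≤ 2 * ∑' v : ℕ, f (u 0 + 1 + v) := by
        rw [Finset.sum_Ico_eq_sum_range]
        gcongr
        exact ENNReal.sum_le_tsum _
    _ = _ := by simp [f, u]

theorem exists_nat_one_div_le_and_mul_le_two {ε : ℝ} (hε0 : 0 < ε) (hε1 : ε ≤ 1) {N₀ : ℕ}
    (hN₀ : N₀ * ε ≤ 1) : ∃ n : ℕ, 0 < n ∧ N₀ ≤ n ∧ 1 / (n : ℝ) ≤ ε ∧ n * ε ≤ 2 := by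
  have hn := Nat.le_ceil (1 / ε)
  have hn' := mul_lt_mul_of_pos_right (Nat.ceil_lt_add_one (by positivity : 0 ≤ 1 / ε)) hε0
  rw [div_le_iff₀ hε0] at hn
  rw [add_mul, one_div_mul_cancel hε0.ne', one_mul] at hn'
  refine ⟨⌈1 / ε⌉₊, Nat.ceil_pos.2 (by positivity), ?_, ?_, by linarith⟩
  · exact_mod_cast ((le_div_iff₀ hε0).2 hN₀).trans (Nat.le_ceil _)
  · rw [div_le_iff₀ (by positivity)]; linarith

theorem norm_one_sub_exp_I_mul (x : ℝ) :
    ‖1 - Complex.exp (Complex.I * x)‖ = 2 * |Real.sin (x / 2)| := by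
  rw [norm_sub_rev, Complex.norm_exp_I_mul_ofReal_sub_one, norm_mul, Real.norm_two,
    Real.norm_eq_abs]

section Coefficients

variable {d : ℕ}

theorem diagSum_eq_norm1_or_neg {k : Fin d → ℤ} (hk : (∀ j, 0 ≤ k j) ∨ (∀ j, k j < 0)) :
    diagSum k = norm1 k ∨ diagSum k = -norm1 k := by
  unfold diagSum norm1
  push_cast
  rcases hk with hk | hk
  · exact .inl (Finset.sum_congr rfl fun j _ => (abs_of_nonneg (hk j)).symm)
  · refine .inr ?_
    rw [← Finset.sum_neg_distrib]
    exact Finset.sum_congr rfl fun j _ => by rw [abs_of_neg (hk j), neg_neg]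

theorem div_le_norm_one_sub_exp_diagSum {k : Fin d → ℤ} (hk : (∀ j, 0 ≤ k j) ∨ (∀ j, k j < 0))
    {M : ℝ} (hM : 0 < M) (hkM : norm1 k ≤ 2 * M) :
    norm1 k / M ≤ ‖1 - Complex.exp (Complex.I * ((π / (2 * M) : ℝ) : ℂ) * (diagSum k : ℂ))‖ := by
  set θ : ℝ := π / (2 * M) * norm1 k / 2 with hθdef
  have hθ : θ ≤ π / 2 := by
    have : π / (2 * M) * norm1 k ≤ π / (2 * M) * (2 * M) := by gcongr
    rw [div_mul_cancel₀ _ (by positivity)] at this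
    rw [hθdef]; linarith
  have hχ : ‖1 - Complex.exp (Complex.I * ((π / (2 * M) : ℝ) : ℂ) * (diagSum k : ℂ))‖ =
      2 * |Real.sin θ| := by
    rcases diagSum_eq_norm1_or_neg hk with h | h
    · rw [h, ← norm_one_sub_exp_I_mul]; push_cast; ring_nf
    · rw [h, ← abs_neg, ← Real.sin_neg,
        show -θ = π / (2 * M) * (-(norm1 k : ℝ)) / 2 by ring, ← norm_one_sub_exp_I_mul]
      push_cast; ring_nf
  rw [hχ]
  calc (norm1 k : ℝ) / M = 2 * (2 / π * θ) := by rw [hθdef]; field_simp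
    _ ≤ 2 * |Real.sin θ| := by
      gcongr; exact (Real.mul_le_sin (by positivity) hθ).trans (le_abs_self _)

-- The paper's `D^{(s-1)}(h)` and `E_P(ρ)`, as `ℓ^p`-sums over the coefficients `a = f̂`.
noncomputable def diagModulus (s p : ℝ) (a : (Fin d → ℤ) → ℂ) (h : ℝ) : ℝ≥0∞ :=
  (∑' k : Fin d → ℤ, if 1 ≤ norm1 k then
    ENNReal.ofReal ((((norm1 k : ℝ) ^ (s - 1)) * ‖a k‖ *
      ‖1 - Complex.exp (Complex.I * (h : ℂ) * (diagSum k : ℂ))‖) ^ p) else 0) ^ (1 / p)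

noncomputable def abelPoissonError (s p : ℝ) (a : (Fin d → ℤ) → ℂ) (ρ : ℝ) : ℝ≥0∞ :=
  (∑' k : Fin d → ℤ, if 1 ≤ norm1 k then
    ENNReal.ofReal (((1 - ρ ^ ((norm1 k : ℝ) ^ s)) * ‖a k‖) ^ p) else 0) ^ (1 / p)

theorem rpow_tsum_le_mul_diagModulus {s p : ℝ} (hp : 0 < p) {a : (Fin d → ℤ) → ℂ}
    (ha : ∀ k, ¬((∀ j, 0 ≤ k j) ∨ (∀ j, k j < 0)) → a k = 0)
    (P : (Fin d → ℤ) → Prop) [DecidablePred P] {x : (Fin d → ℤ) → ℝ} (hx : ∀ k, 0 ≤ x k)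
    {c M : ℝ} (hc : 0 ≤ c) (hM : 0 < M)
    (hP : ∀ k, P k → 1 ≤ norm1 k ∧ norm1 k ≤ 2 * M ∧
      x k ≤ c * ((norm1 k : ℝ) ^ (s - 1) * (norm1 k / M))) :
    (∑' k, if P k then ENNReal.ofReal ((x k * ‖a k‖) ^ p) else 0) ^ (1 / p)
      ≤ ENNReal.ofReal c * diagModulus s p a (π / (2 * M)) := by
  refine ENNReal.rpow_tsum_le_ofReal_mul_rpow_tsum hp hc fun k => ?_
  by_cases hk : P k
  · obtain ⟨hk1, hkM, hxk⟩ := hP k hk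
    rw [if_pos hk, if_pos hk1, ← ENNReal.ofReal_mul (Real.rpow_nonneg hc _),
      ← Real.mul_rpow hc (by positivity)]
    refine ENNReal.ofReal_le_ofReal
      (Real.rpow_le_rpow (mul_nonneg (hx k) (norm_nonneg _)) ?_ hp.le)
    by_cases hak : a k = 0
    · simp [hak]
    have hχ := div_le_norm_one_sub_exp_diagSum (not_not.1 (mt (ha k) hak)) hM hkM
    calc x k * ‖a k‖ ≤ c * ((norm1 k : ℝ) ^ (s - 1) * (norm1 k / M)) * ‖a k‖ := by gcongr
      _ ≤ c * ((norm1 k : ℝ) ^ (s - 1) *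
          ‖1 - Complex.exp (Complex.I * ((π / (2 * M) : ℝ) : ℂ) * (diagSum k : ℂ))‖) *
          ‖a k‖ := by gcongr
      _ = _ := by ring
  · simp [hk]

theorem abelPoissonError_le {s p : ℝ} (hs : 1 ≤ s) (hp : 1 ≤ p) {a : (Fin d → ℤ) → ℂ}
    (ha : ∀ k, ¬((∀ j, 0 ≤ k j) ∨ (∀ j, k j < 0)) → a k = 0) {ρ : ℝ} (hρ0 : 0 ≤ ρ)
    (hρ1 : ρ ≤ 1) {N : ℕ} (hN : 0 < N) {c : ℝ} (hc : N * (1 - ρ) ≤ c) :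
    abelPoissonError s p a ρ ≤ ENNReal.ofReal c * diagModulus s p a (π / (2 * N)) +
      ∑' j : ℕ, diagModulus s p a (π / (2 * (N * 2 ^ j))) := by
  have hp0 : 0 < p := zero_lt_one.trans_le hp
  have hp1 : 1 / p ≤ 1 := by rw [div_le_one hp0]; exact hp
  set x : (Fin d → ℤ) → ℝ := fun k => 1 - ρ ^ ((norm1 k : ℝ) ^ s)
  have hx : ∀ k, 0 ≤ x k := fun k => sub_nonneg.2 (Real.rpow_le_one hρ0 hρ1 (by positivity))
  set F : (Fin d → ℤ) → ℝ≥0∞ := fun k => ENNReal.ofReal ((x k * ‖a k‖) ^ p)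
  set L : ℝ≥0∞ := ∑' k, if 1 ≤ norm1 k ∧ norm1 k ≤ N then F k else 0
  set B : ℕ → ℝ≥0∞ := fun j =>
    ∑' k, if N * 2 ^ j < norm1 k ∧ norm1 k ≤ N * 2 ^ (j + 1) then F k else 0
  have hsplit : ∑' k, (if 1 ≤ norm1 k then F k else 0) ≤ L + ∑' j, B j := by
    rw [ENNReal.tsum_comm, ← ENNReal.tsum_add]
    exact ENNReal.tsum_le_tsum fun k => ite_one_le_le_add_tsum_dyadic (F k) hN (norm1 k)
  have hL : L ^ (1 / p) ≤ ENNReal.ofReal c * diagModulus s p a (π / (2 * N)) :=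
    rpow_tsum_le_mul_diagModulus hp0 ha _ hx (le_trans (by positivity) hc)
      (by positivity) fun k ⟨hk1, hkN⟩ => ⟨hk1, by exact_mod_cast (by omega : norm1 k ≤ 2 * N),
        one_sub_rpow_rpow_le_mul hρ0 hs (by exact_mod_cast hk1) (by positivity) hc⟩
  have hB : ∀ j, B j ^ (1 / p) ≤ diagModulus s p a (π / (2 * (N * 2 ^ j))) := by
    intro j
    refine (rpow_tsum_le_mul_diagModulus (M := N * 2 ^ j) hp0 ha _ hx zero_le_one
      (by positivity) fun k ⟨hk1, hkN⟩ => ⟨by omega, ?_, ?_⟩).trans_eq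
      (by rw [ENNReal.ofReal_one, one_mul])
    · rw [pow_succ, ← mul_assoc] at hkN
      exact_mod_cast (by omega : norm1 k ≤ 2 * (N * 2 ^ j))
    · rw [one_mul]
      exact one_sub_rpow_rpow_le_of_le hρ0 hs (by exact_mod_cast (by omega : 1 ≤ norm1 k))
        (by positivity) (by exact_mod_cast hk1.le)
  calc abelPoissonError s p a ρ = (∑' k, if 1 ≤ norm1 k then F k else 0) ^ (1 / p) := rfl
    _ ≤ (L + ∑' j, B j) ^ (1 / p) := by gcongr
    _ ≤ L ^ (1 / p) + (∑' j, B j) ^ (1 / p) :=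
      ENNReal.rpow_add_le_add_rpow _ _ (by positivity) hp1
    _ ≤ L ^ (1 / p) + ∑' j, B j ^ (1 / p) := by
      gcongr; exact ENNReal.rpow_tsum_le_tsum_rpow _ (by positivity) hp1
    _ ≤ _ := add_le_add hL (ENNReal.tsum_le_tsum hB)

theorem abelPoissonError_le_ofReal_add_one_mul_tsum {s p : ℝ} (hs : 1 ≤ s) (hp : 1 ≤ p)
    {a : (Fin d → ℤ) → ℂ} (ha : ∀ k, ¬((∀ j, 0 ≤ k j) ∨ (∀ j, k j < 0)) → a k = 0) {ρ : ℝ}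
    (hρ0 : 0 ≤ ρ) (hρ1 : ρ ≤ 1) {N : ℕ} (hN : 0 < N) {c : ℝ} (hc : N * (1 - ρ) ≤ c) :
    abelPoissonError s p a ρ ≤
      ENNReal.ofReal (c + 1) * ∑' j : ℕ, diagModulus s p a (π / (2 * (N * 2 ^ j))) := by
  have hc0 : 0 ≤ c := le_trans (mul_nonneg (by positivity) (by linarith)) hc
  refine (abelPoissonError_le hs hp ha hρ0 hρ1 hN hc).trans ?_
  rw [ENNReal.ofReal_add hc0 zero_le_one, add_mul, ENNReal.ofReal_one, one_mul]
  gcongr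
  simpa using ENNReal.le_tsum (f := fun j : ℕ => diagModulus s p a (π / (2 * (N * 2 ^ j)))) 0

end Coefficients

theorem tsum_dyadic_le_of_le_ofReal_mul {D : ℝ → ℝ≥0∞} {ω : ℝ → ℝ}
    (hωm : MonotoneOn ω (Set.Icc 0 1)) (hωnn : ∀ t ∈ Set.Icc (0 : ℝ) 1, 0 ≤ ω t) {C : ℝ}
    (hC : 0 ≤ C) {n : ℕ} (hn : 0 < n) {N : ℝ} (hN : π * n ≤ N)
    (hD : ∀ h : ℝ, 0 < h → h ≤ 1 / n → D h ≤ ENNReal.ofReal (C * ω h)) :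
    ∑' j : ℕ, D (π / (2 * (N * 2 ^ j))) ≤
      ENNReal.ofReal C * (2 * ∑' v : ℕ, ENNReal.ofReal (ω (1 / (n + 1 + v)) / (n + 1 + v))) := by
  have hIcc : ∀ x : ℝ, 1 ≤ x → 1 / x ∈ Set.Icc (0 : ℝ) 1 := fun x hx =>
    ⟨one_div_nonneg.2 (zero_le_one.trans hx), (div_le_one (zero_lt_one.trans_le hx)).2 hx⟩
  have hN0 : 0 < N := lt_of_lt_of_le (by positivity) hN
  have hj : ∀ j : ℕ, D (π / (2 * (N * 2 ^ j))) ≤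
      ENNReal.ofReal C * ENNReal.ofReal (ω (1 / (n * 2 ^ (j + 1)))) := by
    intro j
    have hle : π / (2 * (N * 2 ^ j)) ≤ 1 / (n * 2 ^ (j + 1)) := by
      rw [div_le_div_iff₀ (by positivity) (by positivity), pow_succ]
      nlinarith [(by positivity : (0 : ℝ) < 2 ^ j)]
    have hn1 : (1 : ℝ) ≤ n * 2 ^ (j + 1) := one_le_mul_of_one_le_of_one_le
      (by exact_mod_cast hn) (one_le_pow₀ one_le_two)
    have hle' : 1 / ((n : ℝ) * 2 ^ (j + 1)) ≤ 1 / n :=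
      one_div_le_one_div_of_le (by positivity) (le_mul_of_one_le_right (by positivity)
        (one_le_pow₀ one_le_two))
    calc D (π / (2 * (N * 2 ^ j))) ≤ ENNReal.ofReal (C * ω (π / (2 * (N * 2 ^ j)))) :=
          hD _ (by positivity) (hle.trans hle')
      _ ≤ ENNReal.ofReal (C * ω (1 / (n * 2 ^ (j + 1)))) := by
          gcongr
          exact hωm ⟨by positivity, hle.trans (hIcc _ hn1).2⟩ (hIcc _ hn1) hle
      _ = _ := ENNReal.ofReal_mul hC
  have hanti : AntitoneOn (fun x : ℝ => ω (1 / x)) (Set.Ici 1) := fun x hx y hy hxy =>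
    hωm (hIcc y hy) (hIcc x hx) (one_div_le_one_div_of_le (zero_lt_one.trans_le hx) hxy)
  calc ∑' j : ℕ, D (π / (2 * (N * 2 ^ j)))
      ≤ ∑' j : ℕ, ENNReal.ofReal C * ENNReal.ofReal (ω (1 / (n * 2 ^ (j + 1)))) :=
        ENNReal.tsum_le_tsum hj
    _ = ENNReal.ofReal C * ∑' j : ℕ, ENNReal.ofReal (ω (1 / (n * 2 ^ (j + 1)))) :=
        ENNReal.tsum_mul_left
    _ ≤ _ := by
        gcongr
        exact tsum_ofReal_le_two_mul_tsum_of_antitoneOn hanti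
          (fun x hx => hωnn _ (hIcc x hx)) hn

theorem stmt_11_general
    {d : ℕ} {p : ℝ} (hp : 1 ≤ p)
    (f : (Fin d → ℝ) → ℂ)
    (ω : ℝ → ℝ)
    (hωm : MonotoneOn ω (Set.Icc 0 1))
    (hω0 : ω 0 = 0)
    (hB : ∃ C₀ > (0:ℝ), ∃ N₀ : ℕ, 1 ≤ N₀ ∧ ∀ n : ℕ, N₀ ≤ n →
      (∑' v : ℕ, ENNReal.ofReal (ω (1 / ((n : ℝ) + 1 + (v : ℝ))) / ((n : ℝ) + 1 + (v : ℝ))))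
        ≤ ENNReal.ofReal (C₀ * ω (1 / (n : ℝ))))
    {s : ℝ} (hs : 1 ≤ s)
    (hY : ∀ k : Fin d → ℤ, ¬ ((∀ j, 0 ≤ k j) ∨ (∀ j, k j < 0)) → fCoeff f k = 0)
    (hD :
      ∃ C > (0:ℝ), ∃ δ > (0:ℝ), ∀ h : ℝ, 0 < |h| → |h| < δ →
      (∑' k : Fin d → ℤ, if 1 ≤ norm1 k then
          ENNReal.ofReal ((((norm1 k : ℝ) ^ (s - 1)) * ‖fCoeff f k‖ * ‖1 - Complex.exp (Complex.I * (h : ℂ) * (diagSum k : ℂ))‖) ^ p) else 0) ^ (1/p)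
        ≤ ENNReal.ofReal (C * ω |h|))
    :
    ∃ C > (0:ℝ), ∃ δ : ℝ, 0 < δ ∧ δ < 1 ∧ ∀ ρ : ℝ, 1 - δ < ρ → ρ < 1 →
      (∑' k : Fin d → ℤ, if 1 ≤ norm1 k then
          ENNReal.ofReal (((1 - ρ ^ ((norm1 k : ℝ) ^ s)) * ‖fCoeff f k‖) ^ p) else 0) ^ (1/p)
        ≤ ENNReal.ofReal (C * ω (1 - ρ)) := by
  obtain ⟨C₀, hC₀, N₀, hN₀, hB⟩ := hB
  obtain ⟨C, hC, δ, hδ, hD⟩ := hD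
  have hωnn : ∀ t ∈ Set.Icc (0 : ℝ) 1, 0 ≤ ω t := fun t ht =>
    hω0 ▸ hωm ⟨le_rfl, zero_le_one⟩ ht ht.1
  have hN₀' : 1 / ((N₀ : ℝ) + 1) ≤ 1 / 2 :=
    one_div_le_one_div_of_le two_pos (by norm_cast; omega)
  refine ⟨18 * C * C₀, by positivity, min δ (1 / (N₀ + 1)), lt_min hδ (by positivity),
    (min_le_right _ _).trans_lt (by linarith), fun ρ hρ hρ1 => ?_⟩
  obtain ⟨hεδ, hεN⟩ : 1 - ρ < δ ∧ 1 - ρ < 1 / (N₀ + 1) := lt_min_iff.1 (by linarith)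
  have hεN' := (lt_div_iff₀ (by positivity)).1 hεN
  obtain ⟨n, hn0, hNn, hnε, hnε'⟩ := exists_nat_one_div_le_and_mul_le_two (ε := 1 - ρ)
    (by linarith) (by linarith) (by linarith)
  have hDω : ∀ h : ℝ, 0 < h → h ≤ 1 / n →
      diagModulus s p (fCoeff f) h ≤ ENNReal.ofReal (C * ω h) := fun h h0 hh => by
    have := hD h (by rwa [abs_of_pos h0]) (by rw [abs_of_pos h0]; linarith)
    rwa [abs_of_pos h0] at this
  have hωn : ω (1 / n) ≤ ω (1 - ρ) :=
    hωm ⟨by positivity, by linarith⟩ ⟨by linarith, by linarith⟩ hnε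
  calc abelPoissonError s p (fCoeff f) ρ
      ≤ ENNReal.ofReal (8 + 1) *
          ∑' j : ℕ, diagModulus s p (fCoeff f) (π / (2 * ((4 * n : ℕ) * 2 ^ j))) :=
        abelPoissonError_le_ofReal_add_one_mul_tsum hs hp hY (by linarith) hρ1.le
          (by positivity) (by push_cast; linarith)
    _ ≤ ENNReal.ofReal 9 * (ENNReal.ofReal C * (2 * ENNReal.ofReal (C₀ * ω (1 - ρ)))) := by
        norm_num only
        gcongr
        refine (tsum_dyadic_le_of_le_ofReal_mul hωm hωnn hC.le hn0 ?_ hDω).trans ?_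
        · push_cast; nlinarith [Real.pi_le_four]
        · gcongr; exact (hB n hNn).trans (by gcongr)
    _ = ENNReal.ofReal (18 * C * C₀ * ω (1 - ρ)) := by
        rw [← ENNReal.ofReal_ofNat 2, ← ENNReal.ofReal_mul zero_le_two, ← ENNReal.ofReal_mul hC.le,
          ← ENNReal.ofReal_mul (by norm_num)]
        congr 1
        ring

theorem stmt_11
    {d : ℕ} (hd : 1 ≤ d) {p : ℝ} (hp : 1 ≤ p)
    (f : (Fin d → ℝ) → ℂ)
    (hper : ∀ (x : Fin d → ℝ) (j : Fin d), f (Function.update x j (x j + 2 * Real.pi)) = f x)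
    (hint : IntegrableOn f (Set.Icc (0 : Fin d → ℝ) (fun _ => 2 * Real.pi)))
    (ω : ℝ → ℝ)
    (hωc : ContinuousOn ω (Set.Icc 0 1)) (hωm : MonotoneOn ω (Set.Icc 0 1))
    (hω0 : ω 0 = 0) (hωpos : ∀ t ∈ Set.Ioc (0:ℝ) 1, 0 < ω t)
    (hB : ∃ C₀ > (0:ℝ), ∃ N₀ : ℕ, 1 ≤ N₀ ∧ ∀ n : ℕ, N₀ ≤ n →
      (∑' v : ℕ, ENNReal.ofReal (ω (1 / ((n : ℝ) + 1 + (v : ℝ))) / ((n : ℝ) + 1 + (v : ℝ))))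
        ≤ ENNReal.ofReal (C₀ * ω (1 / (n : ℝ))))
    {s : ℝ} (hs : 1 ≤ s)
    (hY : ∀ k : Fin d → ℤ, ¬ ((∀ j, 0 ≤ k j) ∨ (∀ j, k j < 0)) → fCoeff f k = 0)
    (hD :
      ∃ C > (0:ℝ), ∃ δ > (0:ℝ), ∀ h : ℝ, 0 < |h| → |h| < δ →
      (∑' k : Fin d → ℤ, if 1 ≤ norm1 k then
          ENNReal.ofReal ((((norm1 k : ℝ) ^ (s - 1)) * ‖fCoeff f k‖ * ‖1 - Complex.exp (Complex.I * (h : ℂ) * (diagSum k : ℂ))‖) ^ p) else 0) ^ (1/p)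
        ≤ ENNReal.ofReal (C * ω |h|))
    :
    ∃ C > (0:ℝ), ∃ δ : ℝ, 0 < δ ∧ δ < 1 ∧ ∀ ρ : ℝ, 1 - δ < ρ → ρ < 1 →
      (∑' k : Fin d → ℤ, if 1 ≤ norm1 k then
          ENNReal.ofReal (((1 - ρ ^ ((norm1 k : ℝ) ^ s)) * ‖fCoeff f k‖) ^ p) else 0) ^ (1/p)
        ≤ ENNReal.ofReal (C * ω (1 - ρ)) :=
  stmt_11_general hp f ω hωm hω0 hB hs hY hD
end

section
/- (Relation (7): asymptotic equivalence of the P^△_{ρ,s}-error and the Abel–Poisson error of the derivative) Let 1 ≤ p < ∞ and s ≥ 1 be real numbers, and let (a_ν)_{ν≥1} be a sequence of nonnegative reals, not all zero, such that ∑_{ν=1}^∞ ν^{sp} a_ν^p < ∞. Then lim_{ρ→1⁻} [ ∑_{ν=1}^∞ (1 − ρ^{ν^s})^p a_ν^p ] / [ ∑_{ν=1}^∞ ν^{(s−1)p} (1 − ρ^{ν})^p a_ν^p ] = 1. -/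
open Filter Real Topology

private lemma bern12 {x m : ℝ} (hx0 : 0 ≤ x) (hm : 1 ≤ m) :
    1 - x ^ m ≤ m * (1 - x) := by
  have h := one_add_mul_self_le_rpow_one_add (s := x - 1) (by linarith) hm
  have hx : (1 : ℝ) + (x - 1) = x := by ring
  rw [hx] at h
  nlinarith

private lemma slope12 {m : ℝ} (hm : 1 ≤ m) :
    Tendsto (fun ρ : ℝ => (1 - ρ ^ m) / (1 - ρ))
      (nhdsWithin 1 (Set.Ico (0:ℝ) 1)) (nhds m) := by
  have hd : HasDerivAt (fun x : ℝ => x ^ m) (m * (1:ℝ) ^ (m - 1)) 1 :=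
    Real.hasDerivAt_rpow_const (Or.inr hm)
  rw [Real.one_rpow, mul_one] at hd
  have h := hasDerivAt_iff_tendsto_slope.mp hd
  have hsub : nhdsWithin (1:ℝ) (Set.Ico (0:ℝ) 1) ≤ nhdsWithin 1 {(1:ℝ)}ᶜ :=
    nhdsWithin_mono _ (fun x hx => ne_of_lt hx.2)
  refine (h.mono_left hsub).congr (fun ρ => ?_)
  rw [slope_def_field, Real.one_rpow]
  rw [show (ρ ^ m - 1) / (ρ - 1) = (1 - ρ ^ m) / (1 - ρ) by
    rw [← neg_div_neg_eq, neg_sub, neg_sub]]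

private lemma slope12n {ν : ℕ} (hν : 1 ≤ ν) :
    Tendsto (fun ρ : ℝ => (1 - ρ ^ ν) / (1 - ρ))
      (nhdsWithin 1 (Set.Ico (0:ℝ) 1)) (nhds (ν : ℝ)) := by
  have hd : HasDerivAt (fun x : ℝ => x ^ ν) ((ν : ℝ) * (1:ℝ) ^ (ν - 1)) 1 :=
    hasDerivAt_pow ν 1
  rw [one_pow, mul_one] at hd
  have h := hasDerivAt_iff_tendsto_slope.mp hd
  have hsub : nhdsWithin (1:ℝ) (Set.Ico (0:ℝ) 1) ≤ nhdsWithin 1 {(1:ℝ)}ᶜ :=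
    nhdsWithin_mono _ (fun x hx => ne_of_lt hx.2)
  refine (h.mono_left hsub).congr (fun ρ => ?_)
  rw [slope_def_field, one_pow]
  rw [show (ρ ^ ν - 1) / (ρ - 1) = (1 - ρ ^ ν) / (1 - ρ) by
    rw [← neg_div_neg_eq, neg_sub, neg_sub]]

theorem stmt_12 {p s : ℝ} (hp : 1 ≤ p) (hs : 1 ≤ s)
    (a : ℕ → ℝ) (ha : ∀ ν, 0 ≤ a ν) (hnz : ∃ ν : ℕ, 1 ≤ ν ∧ a ν ≠ 0)
    (hsum : Summable fun ν : ℕ => (((ν : ℝ) ^ s) * a ν) ^ p) :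
    Filter.Tendsto (fun ρ : ℝ =>
        (∑' ν : ℕ, ((1 - ρ ^ ((ν : ℝ) ^ s)) * a ν) ^ p) /
        (∑' ν : ℕ, (((ν : ℝ) ^ (s - 1)) * (1 - ρ ^ ν) * a ν) ^ p))
      (nhdsWithin 1 (Set.Ico (0:ℝ) 1)) (nhds 1) := by
  have hp0 : (0:ℝ) < p := lt_of_lt_of_le one_pos hp
  have hs0 : (0:ℝ) < s := lt_of_lt_of_le one_pos hs
  set l := nhdsWithin (1:ℝ) (Set.Ico (0:ℝ) 1) with hl
  set L : ℝ := ∑' ν : ℕ, (((ν : ℝ) ^ s) * a ν) ^ p with hL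
  -- positivity of L
  obtain ⟨ν₀, hν₀, ha₀⟩ := hnz
  have hterm_nonneg : ∀ ν : ℕ, 0 ≤ (((ν : ℝ) ^ s) * a ν) ^ p := by
    intro ν
    apply Real.rpow_nonneg
    exact mul_nonneg (Real.rpow_nonneg (Nat.cast_nonneg ν) s) (ha ν)
  have hL0 : 0 < L := by
    refine Summable.tsum_pos hsum hterm_nonneg ν₀ ?_
    apply Real.rpow_pos_of_pos
    apply mul_pos
    · apply Real.rpow_pos_of_pos
      exact_mod_cast Nat.lt_of_lt_of_le Nat.zero_lt_one hν₀
    · exact lt_of_le_of_ne (ha ν₀) (Ne.symm ha₀)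
  -- numerator normalized
  have hF : Tendsto (fun ρ : ℝ =>
      ∑' ν : ℕ, (((1 - ρ ^ ((ν : ℝ) ^ s)) / (1 - ρ)) * a ν) ^ p) l (𝓝 L) := by
    apply tendsto_tsum_of_dominated_convergence hsum
    · intro ν
      rcases Nat.eq_zero_or_pos ν with h0 | h1
      · subst h0
        simp only [Nat.cast_zero, Real.zero_rpow (ne_of_gt hs0), Real.rpow_zero, sub_self,
          zero_div, zero_mul, Real.zero_rpow (ne_of_gt hp0)]
        exact tendsto_const_nhds
      · have hm : 1 ≤ (ν : ℝ) ^ s :=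
          Real.one_le_rpow (by exact_mod_cast h1) (le_of_lt hs0)
        have h1' := (slope12 hm).mul_const (a ν)
        have hc : ContinuousAt (fun x : ℝ => x ^ p) (((ν : ℝ) ^ s) * a ν) :=
          Real.continuousAt_rpow_const _ _ (Or.inr (le_of_lt hp0))
        exact hc.tendsto.comp h1'
    · filter_upwards [self_mem_nhdsWithin] with ρ hρ
      intro ν
      obtain ⟨hρ0, hρ1⟩ := hρ
      have hρc : (0:ℝ) < 1 - ρ := by linarith
      have hbase0 : 0 ≤ (1 - ρ ^ ((ν : ℝ) ^ s)) / (1 - ρ) * a ν := by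
        apply mul_nonneg _ (ha ν)
        apply div_nonneg _ (le_of_lt hρc)
        have := Real.rpow_le_one hρ0 (le_of_lt hρ1) (Real.rpow_nonneg (Nat.cast_nonneg ν) s)
        linarith
      rw [Real.norm_eq_abs, abs_of_nonneg (Real.rpow_nonneg hbase0 p)]
      apply Real.rpow_le_rpow hbase0 _ (le_of_lt hp0)
      apply mul_le_mul_of_nonneg_right _ (ha ν)
      rcases Nat.eq_zero_or_pos ν with h0 | h1
      · subst h0
        simp [Real.zero_rpow (ne_of_gt hs0)]
      · have hm : 1 ≤ (ν : ℝ) ^ s :=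
          Real.one_le_rpow (by exact_mod_cast h1) (le_of_lt hs0)
        rw [div_le_iff₀ hρc]
        exact bern12 hρ0 hm
  -- denominator normalized
  have hG : Tendsto (fun ρ : ℝ =>
      ∑' ν : ℕ, (((ν : ℝ) ^ (s - 1)) * ((1 - ρ ^ ν) / (1 - ρ)) * a ν) ^ p) l (𝓝 L) := by
    apply tendsto_tsum_of_dominated_convergence hsum
    · intro ν
      rcases Nat.eq_zero_or_pos ν with h0 | h1
      · subst h0
        simp only [Nat.cast_zero, pow_zero, sub_self, zero_div, mul_zero, zero_mul,
          Real.zero_rpow (ne_of_gt hp0), Real.zero_rpow (ne_of_gt hs0)]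
        exact tendsto_const_nhds
      · have hν : (0:ℝ) < (ν : ℝ) := by exact_mod_cast h1
        have h1' := ((slope12n h1).const_mul ((ν : ℝ) ^ (s - 1))).mul_const (a ν)
        have hrw : (ν : ℝ) ^ (s - 1) * (ν : ℝ) = (ν : ℝ) ^ s := by
          rw [← Real.rpow_add_one (ne_of_gt hν) (s - 1), sub_add_cancel]
        rw [hrw] at h1'
        have hc : ContinuousAt (fun x : ℝ => x ^ p) (((ν : ℝ) ^ s) * a ν) :=
          Real.continuousAt_rpow_const _ _ (Or.inr (le_of_lt hp0))
        exact hc.tendsto.comp h1'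
    · filter_upwards [self_mem_nhdsWithin] with ρ hρ
      intro ν
      obtain ⟨hρ0, hρ1⟩ := hρ
      have hρc : (0:ℝ) < 1 - ρ := by linarith
      have hpow1 : ρ ^ ν ≤ 1 := pow_le_one₀ hρ0 (le_of_lt hρ1)
      have hbase0 : 0 ≤ (ν : ℝ) ^ (s - 1) * ((1 - ρ ^ ν) / (1 - ρ)) * a ν := by
        apply mul_nonneg _ (ha ν)
        apply mul_nonneg (Real.rpow_nonneg (Nat.cast_nonneg ν) _)
        apply div_nonneg _ (le_of_lt hρc)
        linarith
      rw [Real.norm_eq_abs, abs_of_nonneg (Real.rpow_nonneg hbase0 p)]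
      apply Real.rpow_le_rpow hbase0 _ (le_of_lt hp0)
      apply mul_le_mul_of_nonneg_right _ (ha ν)
      rcases Nat.eq_zero_or_pos ν with h0 | h1
      · subst h0
        simp [Real.zero_rpow (ne_of_gt hs0)]
      · have hν : (0:ℝ) < (ν : ℝ) := by exact_mod_cast h1
        have hrw : (ν : ℝ) ^ (s - 1) * (ν : ℝ) = (ν : ℝ) ^ s := by
          rw [← Real.rpow_add_one (ne_of_gt hν) (s - 1), sub_add_cancel]
        rw [← hrw]
        apply mul_le_mul_of_nonneg_left _ (Real.rpow_nonneg (Nat.cast_nonneg ν) _)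
        rw [div_le_iff₀ hρc, ← Real.rpow_natCast ρ ν]
        exact bern12 hρ0 (by exact_mod_cast h1)
  -- combine
  have hdiv := hF.div hG (ne_of_gt hL0)
  rw [div_self (ne_of_gt hL0)] at hdiv
  refine hdiv.congr' ?_
  filter_upwards [self_mem_nhdsWithin] with ρ hρ
  obtain ⟨hρ0, hρ1⟩ := hρ
  have hρc : (0:ℝ) < 1 - ρ := by linarith
  have hC : (0:ℝ) < (1 - ρ) ^ p := Real.rpow_pos_of_pos hρc p
  have hnum : (∑' ν : ℕ, ((1 - ρ ^ ((ν : ℝ) ^ s)) * a ν) ^ p)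
      = (∑' ν : ℕ, (((1 - ρ ^ ((ν : ℝ) ^ s)) / (1 - ρ)) * a ν) ^ p) * (1 - ρ) ^ p := by
    rw [← tsum_mul_right]
    apply tsum_congr
    intro ν
    have hb0 : 0 ≤ (1 - ρ ^ ((ν : ℝ) ^ s)) / (1 - ρ) * a ν := by
      apply mul_nonneg _ (ha ν)
      apply div_nonneg _ (le_of_lt hρc)
      have := Real.rpow_le_one hρ0 (le_of_lt hρ1) (Real.rpow_nonneg (Nat.cast_nonneg ν) s)
      linarith
    rw [← Real.mul_rpow hb0 (le_of_lt hρc)]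
    congr 1
    field_simp
  have hden : (∑' ν : ℕ, (((ν : ℝ) ^ (s - 1)) * (1 - ρ ^ ν) * a ν) ^ p)
      = (∑' ν : ℕ, (((ν : ℝ) ^ (s - 1)) * ((1 - ρ ^ ν) / (1 - ρ)) * a ν) ^ p) * (1 - ρ) ^ p := by
    rw [← tsum_mul_right]
    apply tsum_congr
    intro ν
    have hpow1 : ρ ^ ν ≤ 1 := pow_le_one₀ hρ0 (le_of_lt hρ1)
    have hb0 : 0 ≤ (ν : ℝ) ^ (s - 1) * ((1 - ρ ^ ν) / (1 - ρ)) * a ν := by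
      apply mul_nonneg _ (ha ν)
      apply mul_nonneg (Real.rpow_nonneg (Nat.cast_nonneg ν) _)
      apply div_nonneg _ (le_of_lt hρc)
      linarith
    rw [← Real.mul_rpow hb0 (le_of_lt hρc)]
    congr 1
    field_simp
  simp only [Pi.div_apply, hnum, hden]
  rw [mul_div_mul_right _ _ (ne_of_gt hC)]
end
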